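/- arXiv:2002.09967 — 6 statements merged into one kernel-verified Lean document; each statement's English description precedes it below -/
import Mathlib

section
/- Let f ∈ L^1_γ(ℝ^d). Then sup_{R>0} R^{σ/(1−m)−(d−γ)} ∫_{{|x|≥R}} |f(x)| |x|^{−γ} dx < ∞ if and only if there exist constants C > 0 and R_0 > 0 such that ∫_{B_{|x|/2}(x)} |f(y)| |y|^{−γ} dy ≤ C |x|^{d−γ−σ/(1−m)} for every x ∈ ℝ^d with |x| ≥ R_0, where B_{|x|/2}(x) is the open Euclidean ball of radius |x|/2 centred at x. (Equivalence of the tail conditions (TC) and (TC').) -/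
/-!
With `α = σ/(1-m) - (d-γ) > 0`, (TC) ⇒ (TC') because `B(x, |x|/2)` lies in `{|y| ≥ |x|/2}`.
Conversely, scaling a finite cover of the compact shell `1 ≤ |y| ≤ 2` by balls of radius `1/2`
covers every annulus `r ≤ |y| < 2r` by a fixed number of balls `B(x, |x|/2)` with `|x| ≥ r`, so
(TC') bounds its mass by `O(r^{-α})`; summing over the dyadic annuli beyond `R` gives a geometric
series, hence a tail `O(R^{-α})`, while for small `R` the tail is at most `‖f‖_{L^1_γ}`.
-/

open MeasureTheory Real

/-- The weighted tail integral `∫_{|x| ≥ R} |f(x)| |x|^{-γ} dx`. -/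
noncomputable def weightedTail (d : ℕ) (γ : ℝ) (f : EuclideanSpace ℝ (Fin d) → ℝ) (R : ℝ) : ℝ :=
  ∫ x in {x : EuclideanSpace ℝ (Fin d) | R ≤ ‖x‖}, |f x| * ‖x‖ ^ (-γ)

open Set Metric

theorem Real.rpow_mul_le_iff_le_mul_rpow_neg {R T M α : ℝ} (hR : 0 < R) :
    R ^ α * T ≤ M ↔ T ≤ M * R ^ (-α) := by
  rw [rpow_neg hR.le, ← div_eq_mul_inv, le_div_iff₀' (rpow_pos_of_pos hR α)]

theorem Metric.ball_half_norm_subset {E : Type*} [SeminormedAddCommGroup E] (x : E) :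
    ball x (‖x‖ / 2) ⊆ {y | ‖x‖ / 2 ≤ ‖y‖} := by
  intro y hy
  have := norm_sub_norm_le x y
  rw [mem_ball, dist_comm, dist_eq_norm] at hy
  show ‖x‖ / 2 ≤ ‖y‖
  linarith

theorem exists_finset_ball_cover_annulus (E : Type*) [NormedAddCommGroup E] [NormedSpace ℝ E]
    [ProperSpace E] :
    ∃ t : Finset E, (∀ x ∈ t, 1 ≤ ‖x‖) ∧ ∀ r : ℝ, 0 < r →
      norm ⁻¹' Ico r (2 * r) ⊆ ⋃ x ∈ t, ball (r • x) (‖r • x‖ / 2) := by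
  have hK : IsCompact (norm ⁻¹' Icc (1 : ℝ) 2 : Set E) :=
    (isCompact_closedBall (0 : E) 2).of_isClosed_subset
      (isClosed_Icc.preimage continuous_norm) fun y hy => mem_closedBall_zero_iff.2 hy.2
  obtain ⟨s, hsK, hs, hcover⟩ := finite_cover_balls_of_compact hK (by norm_num : (0 : ℝ) < 1 / 2)
  refine ⟨hs.toFinset, fun x hx => (hsK (hs.mem_toFinset.1 hx)).1, fun r hr y hy => ?_⟩
  have hy' : r⁻¹ • y ∈ (norm ⁻¹' Icc (1 : ℝ) 2 : Set E) := by
    rw [mem_preimage, norm_smul, norm_inv, Real.norm_of_nonneg hr.le, ← div_eq_inv_mul,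
      mem_Icc, le_div_iff₀ hr, div_le_iff₀ hr]
    exact ⟨by linarith [hy.1], by linarith [hy.2]⟩
  obtain ⟨x, hx, hyx⟩ := mem_iUnion₂.1 (hcover hy')
  refine mem_iUnion₂.2 ⟨x, hs.mem_toFinset.2 hx, ?_⟩
  rw [← smul_inv_smul₀ hr.ne' y, norm_smul, mul_div_assoc, ← _root_.smul_ball hr.ne']
  exact smul_mem_smul_set (ball_subset_ball (by linarith [(hsK hx).1]) hyx)

theorem MeasureTheory.Measure.restrict_biUnion_finset_le {α ι : Type*} [MeasurableSpace α]
    {μ : Measure α} (t : Finset ι) (u : ι → Set α) :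
    μ.restrict (⋃ i ∈ t, u i) ≤ ∑ i ∈ t, μ.restrict (u i) :=
  Measure.le_iff.2 fun A hA => by
    simpa [hA, inter_iUnion₂, Measure.finsetSum_apply] using measure_biUnion_finset_le t (A ∩ u ·)

theorem MeasureTheory.setIntegral_biUnion_finset_le {α ι : Type*} [MeasurableSpace α]
    {μ : Measure α} {g : α → ℝ} (hg0 : 0 ≤ g) (hg : Integrable g μ) (t : Finset ι)
    (u : ι → Set α) : ∫ y in ⋃ i ∈ t, u i, g y ∂μ ≤ ∑ i ∈ t, ∫ y in u i, g y ∂μ := by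
  rw [← integral_finsetSum_measure fun i _ => hg.restrict]
  exact integral_mono_measure (Measure.restrict_biUnion_finset_le t u) (ae_of_all _ hg0)
    (integrable_finsetSum_measure.2 fun i _ => hg.restrict)

section Tail

variable {E : Type*} [NormedAddCommGroup E] [MeasurableSpace E] {μ : Measure E} {g : E → ℝ}
  {α : ℝ}

theorem exists_setIntegral_ball_le_of_bddAbove (hg0 : 0 ≤ g) (hg : Integrable g μ)
    (h : BddAbove {y : ℝ | ∃ R : ℝ, 0 < R ∧ y = R ^ α * ∫ y in {y | R ≤ ‖y‖}, g y ∂μ}) :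
    ∃ C > (0 : ℝ), ∃ R₀ > (0 : ℝ), ∀ x : E, R₀ ≤ ‖x‖ →
      ∫ y in ball x (‖x‖ / 2), g y ∂μ ≤ C * ‖x‖ ^ (-α) := by
  obtain ⟨M, hM⟩ := h
  have htail : ∀ R, 0 < R → ∫ y in {y | R ≤ ‖y‖}, g y ∂μ ≤ max M 1 * R ^ (-α) := fun R hR =>
    (rpow_mul_le_iff_le_mul_rpow_neg hR).1 ((hM ⟨R, hR, rfl⟩).trans (le_max_left M 1))
  refine ⟨max M 1 * 2 ^ α, by positivity, 1, one_pos, fun x hx => ?_⟩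
  calc ∫ y in ball x (‖x‖ / 2), g y ∂μ ≤ ∫ y in {y | ‖x‖ / 2 ≤ ‖y‖}, g y ∂μ :=
        setIntegral_mono_set hg.integrableOn (ae_of_all _ hg0)
          (ball_half_norm_subset x).eventuallyLE
    _ ≤ max M 1 * (‖x‖ / 2) ^ (-α) := htail _ (by linarith)
    _ = max M 1 * 2 ^ α * ‖x‖ ^ (-α) := by
        rw [div_rpow (norm_nonneg x) zero_le_two, rpow_neg zero_le_two, div_inv_eq_mul]
        ring

theorem exists_setIntegral_annulus_le [NormedSpace ℝ E] [ProperSpace E] (hg0 : 0 ≤ g)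
    (hg : Integrable g μ) (hα : 0 ≤ α) {C R₀ : ℝ} (hC : 0 ≤ C) (hR₀ : 0 < R₀)
    (hball : ∀ x : E, R₀ ≤ ‖x‖ → ∫ y in ball x (‖x‖ / 2), g y ∂μ ≤ C * ‖x‖ ^ (-α)) :
    ∃ K, ∀ r, R₀ ≤ r → ∫ y in norm ⁻¹' Ico r (2 * r), g y ∂μ ≤ K * r ^ (-α) := by
  obtain ⟨t, ht, hcover⟩ := exists_finset_ball_cover_annulus E
  refine ⟨t.card * C, fun r hr => ?_⟩
  have hr0 : 0 < r := hR₀.trans_le hr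
  have hnorm : ∀ x ∈ t, r ≤ ‖r • x‖ := fun x hx => by
    rw [norm_smul, Real.norm_of_nonneg hr0.le]
    exact le_mul_of_one_le_right hr0.le (ht x hx)
  calc ∫ y in norm ⁻¹' Ico r (2 * r), g y ∂μ
      ≤ ∫ y in ⋃ x ∈ t, ball (r • x) (‖r • x‖ / 2), g y ∂μ :=
        setIntegral_mono_set hg.integrableOn (ae_of_all _ hg0) (hcover r hr0).eventuallyLE
    _ ≤ ∑ x ∈ t, ∫ y in ball (r • x) (‖r • x‖ / 2), g y ∂μ :=
        setIntegral_biUnion_finset_le hg0 hg t _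
    _ ≤ ∑ x ∈ t, C * r ^ (-α) := Finset.sum_le_sum fun x hx =>
        (hball _ (hr.trans (hnorm x hx))).trans <| mul_le_mul_of_nonneg_left
          (rpow_le_rpow_of_nonpos hr0 (hnorm x hx) (neg_nonpos.2 hα)) hC
    _ = t.card * C * r ^ (-α) := by rw [Finset.sum_const, nsmul_eq_mul, mul_assoc]

variable [OpensMeasurableSpace E]

theorem hasSum_setIntegral_dyadic_annulus (hg : Integrable g μ) {R : ℝ} (hR : 0 < R) :
    HasSum (fun k : ℕ => ∫ y in norm ⁻¹' Ico (2 ^ k * R) (2 ^ (k + 1) * R), g y ∂μ)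
      (∫ y in {y | R ≤ ‖y‖}, g y ∂μ) := by
  have hmono : Monotone fun k : ℕ => (2 : ℝ) ^ k * R := fun i j hij => by
    dsimp only
    gcongr
    exact one_le_two
  have hunbdd : ¬BddAbove (range fun k : ℕ => (2 : ℝ) ^ k * R) :=
    Filter.not_bddAbove_of_tendsto_atTop
      ((tendsto_pow_atTop_atTop_of_one_lt one_lt_two).atTop_mul_const hR)
  have hunion : ⋃ k : ℕ, Ico ((2 : ℝ) ^ k * R) (2 ^ (k + 1) * R) = Ici R := by
    simpa using iUnion_Ico_map_succ_eq_Ici (fun k => hmono (Nat.zero_le k)) hunbdd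
  have hsum := hasSum_integral_iUnion (μ := μ)
    (fun k => measurableSet_Ico.preimage measurable_norm)
    (fun i j hij => (hmono.pairwise_disjoint_on_Ico_succ hij).preimage norm) hg.integrableOn
  simp only [Order.succ_eq_add_one, ← preimage_iUnion, hunion] at hsum
  exact hsum

theorem setIntegral_tail_le_of_annulus_le (hg : Integrable g μ) (hα : 0 < α) {K R₀ : ℝ}
    (hR₀ : 0 < R₀) (hK : ∀ r, R₀ ≤ r → ∫ y in norm ⁻¹' Ico r (2 * r), g y ∂μ ≤ K * r ^ (-α))
    {R : ℝ} (hR : R₀ ≤ R) :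
    ∫ y in {y | R ≤ ‖y‖}, g y ∂μ ≤ K * (1 - 2 ^ (-α))⁻¹ * R ^ (-α) := by
  have hR0 : 0 < R := hR₀.trans_le hR
  have hq1 : (2 : ℝ) ^ (-α) < 1 := rpow_lt_one_of_one_lt_of_neg one_lt_two (neg_neg_of_pos hα)
  have hgeom := (hasSum_geometric_of_lt_one (rpow_nonneg zero_le_two (-α)) hq1).mul_left
    (K * R ^ (-α))
  have hterm : ∀ k : ℕ, ∫ y in norm ⁻¹' Ico (2 ^ k * R) (2 ^ (k + 1) * R), g y ∂μ ≤
      K * R ^ (-α) * ((2 : ℝ) ^ (-α)) ^ k := fun k => by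
    have hk : R₀ ≤ 2 ^ k * R := hR.trans (le_mul_of_one_le_left hR0.le (one_le_pow₀ one_le_two))
    calc ∫ y in norm ⁻¹' Ico (2 ^ k * R) (2 ^ (k + 1) * R), g y ∂μ
        ≤ K * (2 ^ k * R) ^ (-α) := by rw [pow_succ, mul_comm _ (2 : ℝ), mul_assoc]; exact hK _ hk
      _ = K * R ^ (-α) * ((2 : ℝ) ^ (-α)) ^ k := by
        rw [mul_rpow (by positivity) hR0.le, rpow_pow_comm zero_le_two]
        ring
  calc ∫ y in {y | R ≤ ‖y‖}, g y ∂μ ≤ K * R ^ (-α) * (1 - 2 ^ (-α))⁻¹ :=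
        hasSum_le hterm (hasSum_setIntegral_dyadic_annulus hg hR0) hgeom
    _ = K * (1 - 2 ^ (-α))⁻¹ * R ^ (-α) := by ring

theorem bddAbove_of_setIntegral_ball_le [NormedSpace ℝ E] [ProperSpace E] (hg0 : 0 ≤ g)
    (hg : Integrable g μ) (hα : 0 < α)
    (h : ∃ C > (0 : ℝ), ∃ R₀ > (0 : ℝ), ∀ x : E, R₀ ≤ ‖x‖ →
      ∫ y in ball x (‖x‖ / 2), g y ∂μ ≤ C * ‖x‖ ^ (-α)) :
    BddAbove {y : ℝ | ∃ R : ℝ, 0 < R ∧ y = R ^ α * ∫ y in {y | R ≤ ‖y‖}, g y ∂μ} := by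
  obtain ⟨C, hC, R₀, hR₀, hball⟩ := h
  obtain ⟨K, hK⟩ := exists_setIntegral_annulus_le hg0 hg hα.le hC.le hR₀ hball
  refine ⟨max (R₀ ^ α * ∫ y, g y ∂μ) (K * (1 - 2 ^ (-α))⁻¹), ?_⟩
  rintro _ ⟨R, hR, rfl⟩
  rcases le_total R R₀ with hRR₀ | hR₀R
  · exact le_max_of_le_left <| mul_le_mul (rpow_le_rpow hR.le hRR₀ hα.le)
      (setIntegral_le_integral hg (ae_of_all _ hg0)) (integral_nonneg fun y => hg0 y)
      (rpow_nonneg hR₀.le α)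
  · exact le_max_of_le_right <| (rpow_mul_le_iff_le_mul_rpow_neg hR).2
      (setIntegral_tail_le_of_annulus_le hg hα hR₀ hK hR₀R)

end Tail

theorem tail_conditions_equivalent_general
    (d : ℕ) (γ β m : ℝ)
    (hγ : γ < d)
    (hm1 : ((d : ℝ) - 2 - β) / ((d : ℝ) - γ) < m) (hm2 : m < 1)
    (f : EuclideanSpace ℝ (Fin d) → ℝ)
    (hf : Integrable (fun x : EuclideanSpace ℝ (Fin d) => |f x| * ‖x‖ ^ (-γ))) :
    BddAbove {y : ℝ | ∃ R : ℝ, 0 < R ∧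
        y = R ^ ((2 + β - γ) / (1 - m) - ((d : ℝ) - γ)) * weightedTail d γ f R}
      ↔ ∃ C > (0 : ℝ), ∃ R₀ > (0 : ℝ), ∀ x : EuclideanSpace ℝ (Fin d), R₀ ≤ ‖x‖ →
          (∫ y in Metric.ball x (‖x‖ / 2), |f y| * ‖y‖ ^ (-γ)) ≤
            C * ‖x‖ ^ ((d : ℝ) - γ - (2 + β - γ) / (1 - m)) := by
  have hα : 0 < (2 + β - γ) / (1 - m) - ((d : ℝ) - γ) := by
    have := (div_lt_iff₀ (sub_pos.2 hγ)).1 hm1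
    rw [sub_pos, lt_div_iff₀ (sub_pos.2 hm2)]
    nlinarith
  have hg0 : 0 ≤ fun x : EuclideanSpace ℝ (Fin d) => |f x| * ‖x‖ ^ (-γ) := fun x => by positivity
  rw [show (d : ℝ) - γ - (2 + β - γ) / (1 - m) = -((2 + β - γ) / (1 - m) - ((d : ℝ) - γ)) by ring]
  exact ⟨exists_setIntegral_ball_le_of_bddAbove hg0 hf, bddAbove_of_setIntegral_ball_le hg0 hf hα⟩

/-- Equivalence of the tail conditions (TC) and (TC'). -/
theorem tail_conditions_equivalent
    (d : ℕ) (hd : 3 ≤ d) (γ β m : ℝ)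
    (hγ : γ < d) (hβ1 : γ - 2 < β) (hβ2 : β ≤ γ * ((d : ℝ) - 2) / d)
    (hm1 : ((d : ℝ) - 2 - β) / ((d : ℝ) - γ) < m) (hm2 : m < 1)
    (f : EuclideanSpace ℝ (Fin d) → ℝ)
    (hf : Integrable (fun x : EuclideanSpace ℝ (Fin d) => |f x| * ‖x‖ ^ (-γ))) :
    BddAbove {y : ℝ | ∃ R : ℝ, 0 < R ∧
        y = R ^ ((2 + β - γ) / (1 - m) - ((d : ℝ) - γ)) * weightedTail d γ f R}
      ↔ ∃ C > (0 : ℝ), ∃ R₀ > (0 : ℝ), ∀ x : EuclideanSpace ℝ (Fin d), R₀ ≤ ‖x‖ →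
          (∫ y in Metric.ball x (‖x‖ / 2), |f y| * ‖y‖ ^ (-γ)) ≤
            C * ‖x‖ ^ ((d : ℝ) - γ - (2 + β - γ) / (1 - m)) :=
  tail_conditions_equivalent_general d γ β m hγ hm1 hm2 f hf
end

section
/- Compactly supported functions are not dense in (X, ‖·‖_X): there exist f ∈ X and δ > 0 such that ‖f − g‖_X ≥ δ for every g ∈ X that vanishes almost everywhere outside some compact subset of ℝ^d. -/
open MeasureTheory Real

/-- The set of values whose supremum is the norm `‖f‖_X`. -/
def XnormSet (d : ℕ) (γ e : ℝ) (f : EuclideanSpace ℝ (Fin d) → ℝ) : Set ℝ :=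
  {y : ℝ | ∃ R : ℝ, 0 < R ∧ y = (max 1 R) ^ e * weightedTail d γ f R}

/-- The norm `‖f‖_X = sup_{R>0} (max{1,R})^e ∫_{|x|≥R} |f| |x|^{-γ}`. -/
noncomputable def Xnorm (d : ℕ) (γ e : ℝ) (f : EuclideanSpace ℝ (Fin d) → ℝ) : ℝ :=
  sSup (XnormSet d γ e f)

/-- Membership in the tail space `X`. -/
def MemX (d : ℕ) (γ e : ℝ) (f : EuclideanSpace ℝ (Fin d) → ℝ) : Prop :=
  Integrable (fun x : EuclideanSpace ℝ (Fin d) => |f x| * ‖x‖ ^ (-γ)) ∧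
    BddAbove (XnormSet d γ e f)

/-! The profile `f x = ‖x‖ ^ (γ - d - e)` on `{1 ≤ ‖x‖}` (zero inside the unit ball) has
scale-invariant weighted tails: by the homogeneity of Lebesgue measure,
`(max 1 R) ^ e * ∫_{‖x‖ ≥ R} |f x| ‖x‖ ^ (-γ) = C` for every `R`, with `C > 0` finite because
`e > 0`. A function vanishing outside a compact set does not change the tail integral of `f` far
out, so its distance to `f` in `X` is at least `C`. -/

open Set Filter Module

section PowerTail

variable {E : Type*} [NormedAddCommGroup E] [NormedSpace ℝ E] [FiniteDimensional ℝ E]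
  [MeasurableSpace E] [BorelSpace E] (μ : Measure E) [μ.IsAddHaarMeasure]

omit [NormedSpace ℝ E] [FiniteDimensional ℝ E] in
lemma measurableSet_le_norm (R : ℝ) : MeasurableSet {x : E | R ≤ ‖x‖} :=
  measurableSet_le measurable_const measurable_norm

lemma integrable_indicator_one_le_norm_rpow_neg {s : ℝ} (hs : (finrank ℝ E : ℝ) < s) :
    Integrable ({x : E | 1 ≤ ‖x‖}.indicator fun x => ‖x‖ ^ (-s)) μ := by
  refine ((integrable_one_add_norm hs).const_mul (2 ^ s)).mono'
    ((by fun_prop : Measurable fun x : E => ‖x‖ ^ (-s)).indicator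
      (measurableSet_le_norm 1)).aestronglyMeasurable (Eventually.of_forall fun x => ?_)
  by_cases hx : 1 ≤ ‖x‖
  · have hx0 : 0 < ‖x‖ := one_pos.trans_le hx
    rw [indicator_of_mem (show x ∈ {x : E | 1 ≤ ‖x‖} from hx), norm_of_nonneg (by positivity)]
    -- `1 + ‖x‖ ≤ 2 ‖x‖` on the support
    calc ‖x‖ ^ (-s) = 2 ^ s * (2 * ‖x‖) ^ (-s) := by
          rw [mul_rpow zero_le_two hx0.le, ← mul_assoc, ← rpow_add two_pos]; simp
      _ ≤ 2 ^ s * (1 + ‖x‖) ^ (-s) := by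
          have hs0 : 0 ≤ s := (Nat.cast_nonneg _).trans hs.le
          exact mul_le_mul_of_nonneg_left
            (rpow_le_rpow_of_nonpos (by positivity) (by linarith) (by linarith)) (by positivity)
  · rw [indicator_of_notMem (show x ∉ {x : E | 1 ≤ ‖x‖} from hx), norm_zero]
    positivity

lemma integral_indicator_le_norm_rpow_neg (s : ℝ) {R : ℝ} (hR : 0 < R) :
    ∫ x, {x : E | R ≤ ‖x‖}.indicator (fun x => ‖x‖ ^ (-s)) x ∂μ
      = R ^ ((finrank ℝ E : ℝ) - s) *
        ∫ x, {x : E | 1 ≤ ‖x‖}.indicator (fun x => ‖x‖ ^ (-s)) x ∂μ := by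
  have hrescale : ∀ x : E, {x : E | R ≤ ‖x‖}.indicator (fun x => ‖x‖ ^ (-s)) x
      = R ^ (-s) * {x : E | 1 ≤ ‖x‖}.indicator (fun x => ‖x‖ ^ (-s)) (R⁻¹ • x) := by
    intro x
    have hnorm : ‖R⁻¹ • x‖ = R⁻¹ * ‖x‖ := by
      rw [norm_smul, norm_of_nonneg (inv_nonneg.mpr hR.le)]
    by_cases hx : R ≤ ‖x‖
    · have hx' : 1 ≤ ‖R⁻¹ • x‖ := by rwa [hnorm, le_inv_mul_iff₀ hR, mul_one]
      simp only [indicator_of_mem (show x ∈ {x : E | R ≤ ‖x‖} from hx),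
        indicator_of_mem (show R⁻¹ • x ∈ {x : E | 1 ≤ ‖x‖} from hx'), hnorm,
        mul_rpow (inv_nonneg.mpr hR.le) (norm_nonneg x), inv_rpow hR.le, ← rpow_neg hR.le, neg_neg]
      rw [← mul_assoc, ← rpow_add hR]
      simp
    · have hx' : ¬ 1 ≤ ‖R⁻¹ • x‖ := by rwa [hnorm, le_inv_mul_iff₀ hR, mul_one]
      simp [indicator_of_notMem (show x ∉ {x : E | R ≤ ‖x‖} from hx),
        indicator_of_notMem (show R⁻¹ • x ∉ {x : E | 1 ≤ ‖x‖} from hx')]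
  simp_rw [hrescale]
  rw [integral_const_mul, Measure.integral_comp_inv_smul_of_nonneg μ _ hR.le, smul_eq_mul,
    ← mul_assoc, ← rpow_natCast, ← rpow_add hR, neg_add_eq_sub]

lemma integral_indicator_one_le_norm_rpow_neg_pos [Nontrivial E] {s : ℝ}
    (hs : (finrank ℝ E : ℝ) < s) :
    0 < ∫ x, {x : E | 1 ≤ ‖x‖}.indicator (fun x => ‖x‖ ^ (-s)) x ∂μ := by
  rw [integral_pos_iff_support_of_nonneg (indicator_nonneg fun x _ => by positivity)
    (integrable_indicator_one_le_norm_rpow_neg μ hs)]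
  have hsupp : {x : E | 1 < ‖x‖} ⊆ Function.support
      ({x : E | 1 ≤ ‖x‖}.indicator fun x => ‖x‖ ^ (-s)) := fun x hx => by
    have hx : 1 < ‖x‖ := hx
    rw [Function.mem_support, indicator_of_mem (show x ∈ {x : E | 1 ≤ ‖x‖} from hx.le)]
    exact (rpow_pos_of_pos (one_pos.trans hx) _).ne'
  obtain ⟨x, hx⟩ := exists_norm_eq E zero_le_two
  refine (IsOpen.measure_pos μ (isOpen_lt continuous_const continuous_norm) ⟨x, ?_⟩).trans_le
    (measure_mono hsupp)
  show 1 < ‖x‖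
  rw [hx]; norm_num

end PowerTail

section TailSpace

variable {d : ℕ} {γ e : ℝ} {f g : EuclideanSpace ℝ (Fin d) → ℝ}

lemma weightedTail_sub_le
    (hf : Integrable fun x : EuclideanSpace ℝ (Fin d) => |f x| * ‖x‖ ^ (-γ))
    (hg : Integrable fun x : EuclideanSpace ℝ (Fin d) => |g x| * ‖x‖ ^ (-γ)) (R : ℝ) :
    weightedTail d γ (fun x => f x - g x) R ≤ weightedTail d γ f R + weightedTail d γ g R := by
  rw [weightedTail, weightedTail, weightedTail, ← integral_add hf.integrableOn hg.integrableOn]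
  refine integral_mono_of_nonneg (Eventually.of_forall fun x => by positivity)
    (hf.integrableOn.add hg.integrableOn) (Eventually.of_forall fun x => ?_)
  simp only [← add_mul]
  exact mul_le_mul_of_nonneg_right (abs_sub _ _) (by positivity)

lemma MemX.bddAbove_sub (hf : MemX d γ e f) (hg : MemX d γ e g) :
    BddAbove (XnormSet d γ e fun x => f x - g x) := by
  obtain ⟨hfi, A, hA⟩ := hf
  obtain ⟨hgi, B, hB⟩ := hg
  refine ⟨A + B, ?_⟩
  rintro _ ⟨R, hR, rfl⟩
  calc (max 1 R) ^ e * weightedTail d γ (fun x => f x - g x) R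
      ≤ (max 1 R) ^ e * (weightedTail d γ f R + weightedTail d γ g R) := by
        gcongr; exact weightedTail_sub_le hfi hgi R
    _ ≤ A + B := by
        rw [mul_add]
        exact add_le_add (hA ⟨R, hR, rfl⟩) (hB ⟨R, hR, rfl⟩)

lemma eventually_weightedTail_sub_eq {K : Set (EuclideanSpace ℝ (Fin d))} (hK : IsCompact K)
    (hg : ∀ᵐ x, x ∉ K → g x = 0) :
    ∀ᶠ R in atTop, weightedTail d γ (fun x => f x - g x) R = weightedTail d γ f R := by
  obtain ⟨M, hM⟩ := hK.isBounded.subset_closedBall 0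
  filter_upwards [eventually_gt_atTop M] with R hR
  refine setIntegral_congr_ae (measurableSet_le_norm R) ?_
  filter_upwards [hg] with x hx hxR
  have hxK : x ∉ K := fun hxK => (hR.trans_le hxR).not_ge (by simpa using hM hxK)
  rw [hx hxK, sub_zero]

lemma exists_rpow_mul_weightedTail_le_Xnorm_sub (hf : MemX d γ e f) (hg : MemX d γ e g)
    {K : Set (EuclideanSpace ℝ (Fin d))} (hK : IsCompact K) (hgK : ∀ᵐ x, x ∉ K → g x = 0) :
    ∃ R > 0, (max 1 R) ^ e * weightedTail d γ f R ≤ Xnorm d γ e fun x => f x - g x := by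
  obtain ⟨R, hR, hRtail⟩ :=
    ((eventually_gt_atTop 0).and (eventually_weightedTail_sub_eq (γ := γ) (f := f) hK hgK)).exists
  exact ⟨R, hR, le_csSup (hf.bddAbove_sub hg) ⟨R, hR, by rw [hRtail]⟩⟩

end TailSpace

noncomputable def tailProfile (d : ℕ) (γ s : ℝ) : EuclideanSpace ℝ (Fin d) → ℝ :=
  {x | 1 ≤ ‖x‖}.indicator fun x => ‖x‖ ^ (γ - s)

section TailProfile

variable {d : ℕ} {γ : ℝ}

lemma abs_tailProfile_mul_rpow (s : ℝ) (x : EuclideanSpace ℝ (Fin d)) :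
    |tailProfile d γ s x| * ‖x‖ ^ (-γ) = {x | 1 ≤ ‖x‖}.indicator (fun x => ‖x‖ ^ (-s)) x := by
  by_cases hx : 1 ≤ ‖x‖
  · rw [tailProfile, indicator_of_mem (show x ∈ {x | 1 ≤ ‖x‖} from hx),
      indicator_of_mem (show x ∈ {x | 1 ≤ ‖x‖} from hx), abs_of_nonneg (by positivity),
      ← rpow_add (one_pos.trans_le hx)]
    ring_nf
  · simp [tailProfile, hx]

lemma weightedTail_tailProfile (s R : ℝ) :
    weightedTail d γ (tailProfile d γ s) R = (max 1 R) ^ ((d : ℝ) - s) *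
      ∫ x, {x : EuclideanSpace ℝ (Fin d) | 1 ≤ ‖x‖}.indicator (fun x => ‖x‖ ^ (-s)) x := by
  simp only [weightedTail, abs_tailProfile_mul_rpow]
  rw [← integral_indicator (measurableSet_le_norm R), indicator_indicator]
  have hset : {x : EuclideanSpace ℝ (Fin d) | R ≤ ‖x‖} ∩ {x | 1 ≤ ‖x‖} =
      {x | max 1 R ≤ ‖x‖} := by
    ext x; simp [and_comm]
  rw [hset, integral_indicator_le_norm_rpow_neg _ s (one_pos.trans_le (le_max_left 1 R)),
    finrank_euclideanSpace_fin]

lemma rpow_mul_weightedTail_tailProfile (e R : ℝ) :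
    (max 1 R) ^ e * weightedTail d γ (tailProfile d γ (d + e)) R =
      ∫ x, {x : EuclideanSpace ℝ (Fin d) | 1 ≤ ‖x‖}.indicator (fun x => ‖x‖ ^ (-(d + e))) x := by
  rw [weightedTail_tailProfile, ← mul_assoc, ← rpow_add (one_pos.trans_le (le_max_left 1 R))]
  simp

lemma memX_tailProfile {e : ℝ} (he : 0 < e) : MemX d γ e (tailProfile d γ (d + e)) := by
  refine ⟨?_, ?_⟩
  · simp only [abs_tailProfile_mul_rpow]
    exact integrable_indicator_one_le_norm_rpow_neg _ (by simpa using he)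
  · exact ⟨_, fun _ ⟨R, _, hR⟩ => hR ▸ (rpow_mul_weightedTail_tailProfile e R).le⟩

end TailProfile

lemma tail_exponent_pos {n γ β m : ℝ} (hγ : γ < n) (hm1 : (n - 2 - β) / (n - γ) < m)
    (hm2 : m < 1) : 0 < (2 + β - γ) / (1 - m) - (n - γ) := by
  rw [div_lt_iff₀ (sub_pos.mpr hγ)] at hm1
  rw [sub_pos, lt_div_iff₀ (sub_pos.mpr hm2)]
  linarith

theorem compactly_supported_not_dense_in_X_general
    (d : ℕ) (hd : 3 ≤ d) (γ β m : ℝ)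
    (hγ : γ < d)
    (hm1 : ((d : ℝ) - 2 - β) / ((d : ℝ) - γ) < m) (hm2 : m < 1)
    (e : ℝ) (he : e = (2 + β - γ) / (1 - m) - ((d : ℝ) - γ)) :
    ∃ f : EuclideanSpace ℝ (Fin d) → ℝ, MemX d γ e f ∧
      ∃ δ > (0 : ℝ), ∀ g : EuclideanSpace ℝ (Fin d) → ℝ, MemX d γ e g →
        (∃ K : Set (EuclideanSpace ℝ (Fin d)), IsCompact K ∧
          ∀ᵐ x : EuclideanSpace ℝ (Fin d), x ∉ K → g x = 0) →
        δ ≤ Xnorm d γ e (fun x => f x - g x) := by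
  have he : 0 < e := he ▸ tail_exponent_pos hγ hm1 hm2
  have : Nontrivial (EuclideanSpace ℝ (Fin d)) :=
    finrank_pos_iff.mp (by rw [finrank_euclideanSpace_fin]; omega)
  have hf := memX_tailProfile (d := d) (γ := γ) he
  refine ⟨_, hf, _, integral_indicator_one_le_norm_rpow_neg_pos (E := EuclideanSpace ℝ (Fin d))
    (s := d + e) volume (by simpa using he), ?_⟩
  rintro g hg ⟨K, hK, hgK⟩
  obtain ⟨R, -, hle⟩ := exists_rpow_mul_weightedTail_le_Xnorm_sub hf hg hK hgK
  rwa [rpow_mul_weightedTail_tailProfile] at hle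

/-- Compactly supported functions are not dense in `(X, ‖·‖_X)`. -/
theorem compactly_supported_not_dense_in_X
    (d : ℕ) (hd : 3 ≤ d) (γ β m : ℝ)
    (hγ : γ < d) (hβ1 : γ - 2 < β) (hβ2 : β ≤ γ * ((d : ℝ) - 2) / d)
    (hm1 : ((d : ℝ) - 2 - β) / ((d : ℝ) - γ) < m) (hm2 : m < 1)
    (e : ℝ) (he : e = (2 + β - γ) / (1 - m) - ((d : ℝ) - γ)) :
    ∃ f : EuclideanSpace ℝ (Fin d) → ℝ, MemX d γ e f ∧
      ∃ δ > (0 : ℝ), ∀ g : EuclideanSpace ℝ (Fin d) → ℝ, MemX d γ e g →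
        (∃ K : Set (EuclideanSpace ℝ (Fin d)), IsCompact K ∧
          ∀ᵐ x : EuclideanSpace ℝ (Fin d), x ∉ K → g x = 0) →
        δ ≤ Xnorm d γ e (fun x => f x - g x) :=
  compactly_supported_not_dense_in_X_general d hd γ β m hγ hm1 hm2 e he
end

section
/- For every constant C > 0, the Barenblatt profile ℬ(x) := (C + |x|^σ)^{−1/(1−m)} satisfies sup_{R>0} R^{σ/(1−m)−(d−γ)} ∫_{{|x|≥R}} ℬ(x) |x|^{−γ} dx = lim_{R→∞} R^{σ/(1−m)−(d−γ)} ∫_{{|x|≥R}} ℬ(x) |x|^{−γ} dx = (1−m) ϑ · 2π^{d/2}/Γ(d/2), where Γ is the Gamma function and 2π^{d/2}/Γ(d/2) is the surface measure of the unit sphere 𝕊^{d−1} ⊂ ℝ^d. -/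
/-!
In polar coordinates the weighted tail is `|𝕊^{d-1}| ∫_R^∞ (C + r^σ)^{-p} r^{d-1-γ} dr` with
`p = 1/(1-m)`, and the substitution `r = R s` turns `R^{σp-(d-γ)}` times it into
`∫_1^∞ (C R^{-σ} + s^σ)^{-p} s^{d-1-γ} ds`. Dropping `C R^{-σ} ≥ 0` bounds the integrand by
`s^{d-1-γ-σp}`, whose integral is `1/(σp-(d-γ)) = (1-m)ϑ`. The bound is uniform in `R` and, by
dominated convergence as `C R^{-σ} → 0`, it is also the limit, hence the supremum.
-/

open MeasureTheory Real Filter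

open Set Topology Module

noncomputable def unitSphereArea (n : ℕ) : ℝ := 2 * π ^ ((n : ℝ) / 2) / Gamma ((n : ℝ) / 2)

theorem unitSphereArea_nonneg (n : ℕ) : 0 ≤ unitSphereArea n := by
  unfold unitSphereArea
  positivity

section Polar

variable {E : Type*} [NormedAddCommGroup E] [InnerProductSpace ℝ E] [FiniteDimensional ℝ E]
  [MeasurableSpace E] [BorelSpace E] [Nontrivial E]

theorem finrank_mul_volume_real_unitBall :
    finrank ℝ E * volume.real (Metric.ball (0 : E) 1) = unitSphereArea (finrank ℝ E) := by
  have hn0 : (0 : ℝ) < finrank ℝ E := Nat.cast_pos.2 finrank_pos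
  have hn : (0 : ℝ) < finrank ℝ E / 2 := by positivity
  have hΓ : 0 < Gamma (finrank ℝ E / 2) := Gamma_pos_of_pos hn
  have hsqrt : √π ^ finrank ℝ E = π ^ ((finrank ℝ E : ℝ) / 2) := by
    rw [sqrt_eq_rpow, ← rpow_natCast, ← rpow_mul pi_pos.le]
    ring_nf
  rw [measureReal_def, InnerProductSpace.volume_ball, ENNReal.ofReal_one, one_pow, one_mul,
    ENNReal.toReal_ofReal (by positivity), Gamma_add_one hn.ne', hsqrt, unitSphereArea]
  field_simp [hn0.ne']

theorem setIntegral_le_norm_eq_unitSphereArea_mul (g : ℝ → ℝ) {R : ℝ} (hR : 0 < R) :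
    ∫ x in {x : E | R ≤ ‖x‖}, g ‖x‖
      = unitSphereArea (finrank ℝ E) * ∫ r in Ioi R, r ^ ((finrank ℝ E : ℝ) - 1) * g r := by
  have hset : MeasurableSet {x : E | R ≤ ‖x‖} := measurableSet_le measurable_const measurable_norm
  have hind : ∀ y : ℝ, y ^ (finrank ℝ E - 1) • (Ici R).indicator g y
      = (Ici R).indicator (fun r => r ^ ((finrank ℝ E : ℝ) - 1) * g r) y := by
    intro y
    by_cases hy : y ∈ Ici R
    · rw [indicator_of_mem hy, indicator_of_mem hy, smul_eq_mul, ← rpow_natCast,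
        Nat.cast_sub finrank_pos, Nat.cast_one]
    · rw [indicator_of_notMem hy, indicator_of_notMem hy, smul_zero]
  rw [← integral_indicator hset]
  change ∫ x, (Ici R).indicator g ‖x‖ = _
  rw [integral_fun_norm_addHaar volume, integral_congr_ae (.of_forall hind),
    setIntegral_indicator measurableSet_Ici, inter_eq_self_of_subset_right (Ici_subset_Ioi.2 hR),
    integral_Ici_eq_integral_Ioi, smul_eq_mul, nsmul_eq_mul, ← mul_assoc,
    finrank_mul_volume_real_unitBall]

end Polar

section RadialIntegral

variable {σ p e : ℝ}

theorem add_rpow_neg_mul_rpow_le (hp : 0 ≤ p) {t s : ℝ} (ht : 0 ≤ t) (hs : 0 < s) :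
    (t + s ^ σ) ^ (-p) * s ^ e ≤ s ^ (e - σ * p) := by
  have hsσ : 0 < s ^ σ := rpow_pos_of_pos hs σ
  calc (t + s ^ σ) ^ (-p) * s ^ e ≤ (s ^ σ) ^ (-p) * s ^ e :=
        mul_le_mul_of_nonneg_right
          (rpow_le_rpow_of_nonpos hsσ (le_add_of_nonneg_left ht) (neg_nonpos.2 hp)) (by positivity)
    _ = s ^ (e - σ * p) := by rw [← rpow_mul hs.le, ← rpow_add hs]; ring_nf

theorem integrableOn_Ioi_one_rpow_sub_mul (hα : e + 1 < σ * p) :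
    IntegrableOn (fun s : ℝ => s ^ (e - σ * p)) (Ioi 1) :=
  integrableOn_Ioi_rpow_of_lt (by linarith) zero_lt_one

theorem integral_Ioi_one_rpow_sub_mul (hα : e + 1 < σ * p) :
    ∫ s in Ioi (1 : ℝ), s ^ (e - σ * p) = 1 / (σ * p - (e + 1)) := by
  rw [integral_Ioi_rpow_of_lt (by linarith) zero_lt_one, one_rpow, neg_div, ← div_neg]
  ring_nf

theorem integral_Ioi_one_add_rpow_le (hp : 0 ≤ p) (hα : e + 1 < σ * p) {t : ℝ} (ht : 0 ≤ t) :
    ∫ s in Ioi (1 : ℝ), (t + s ^ σ) ^ (-p) * s ^ e ≤ 1 / (σ * p - (e + 1)) := by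
  rw [← integral_Ioi_one_rpow_sub_mul hα]
  refine integral_mono_of_nonneg ?_ (integrableOn_Ioi_one_rpow_sub_mul hα) ?_
  all_goals filter_upwards [ae_restrict_mem measurableSet_Ioi] with s (hs : 1 < s)
  · have : 0 < s := one_pos.trans hs
    positivity
  · exact add_rpow_neg_mul_rpow_le hp ht (one_pos.trans hs)

theorem tendsto_integral_Ioi_one_add_rpow (hp : 0 ≤ p) (hα : e + 1 < σ * p) :
    Tendsto (fun t => ∫ s in Ioi (1 : ℝ), (t + s ^ σ) ^ (-p) * s ^ e) (𝓝[≥] 0)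
      (𝓝 (1 / (σ * p - (e + 1)))) := by
  rw [← integral_Ioi_one_rpow_sub_mul hα]
  refine tendsto_integral_filter_of_dominated_convergence _ ?_ ?_
    (integrableOn_Ioi_one_rpow_sub_mul hα) ?_
  · exact .of_forall fun t => by fun_prop
  · filter_upwards [self_mem_nhdsWithin] with t (ht : 0 ≤ t)
    filter_upwards [ae_restrict_mem measurableSet_Ioi] with s (hs : 1 < s)
    have hs0 : 0 < s := one_pos.trans hs
    rw [norm_of_nonneg (by positivity)]
    exact add_rpow_neg_mul_rpow_le hp ht hs0
  · filter_upwards [ae_restrict_mem measurableSet_Ioi] with s (hs : 1 < s)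
    have hsσ : 0 < s ^ σ := rpow_pos_of_pos (one_pos.trans hs) σ
    have hcont : ContinuousAt (fun t : ℝ => (t + s ^ σ) ^ (-p) * s ^ e) 0 :=
      ((continuousAt_id.add continuousAt_const).rpow_const (.inl (by simpa using hsσ.ne'))).mul
        continuousAt_const
    convert hcont.tendsto.mono_left nhdsWithin_le_nhds using 2
    rw [zero_add, ← rpow_mul (one_pos.trans hs).le, ← rpow_add (one_pos.trans hs)]
    ring_nf


theorem add_rpow_mul_rpow_comp_mul {C R s : ℝ} (hC : 0 ≤ C) (hR : 0 < R) (hs : 0 ≤ s) :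
    (C + (R * s) ^ σ) ^ (-p) * (R * s) ^ e
      = R ^ (e - σ * p) * ((C * R ^ (-σ) + s ^ σ) ^ (-p) * s ^ e) := by
  have hscale : C + (R * s) ^ σ = R ^ σ * (C * R ^ (-σ) + s ^ σ) := by
    rw [mul_rpow hR.le hs, mul_add, mul_left_comm, ← rpow_add hR, add_neg_cancel, rpow_zero,
      mul_one]
  rw [hscale, mul_rpow (by positivity) (by positivity), mul_rpow hR.le hs, ← rpow_mul hR.le,
    show R ^ (e - σ * p) = R ^ (σ * -p) * R ^ e by rw [← rpow_add hR]; ring_nf]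
  ring

theorem rpow_mul_integral_Ioi_add_rpow {C R : ℝ} (hC : 0 ≤ C) (hR : 0 < R) :
    R ^ (σ * p - (e + 1)) * ∫ y in Ioi R, (C + y ^ σ) ^ (-p) * y ^ e
      = ∫ s in Ioi (1 : ℝ), (C * R ^ (-σ) + s ^ σ) ^ (-p) * s ^ e := by
  have hsub := integral_comp_mul_left_Ioi (fun y => (C + y ^ σ) ^ (-p) * y ^ e) 1 hR
  rw [mul_one, smul_eq_mul, eq_inv_mul_iff_mul_eq₀ hR.ne'] at hsub
  have hRpow : R ^ (σ * p - (e + 1)) * R * R ^ (e - σ * p) = 1 := by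
    rw [← rpow_add_one hR.ne', ← rpow_add hR, ← rpow_zero R]
    ring_nf
  rw [← hsub, ← mul_assoc, ← integral_const_mul]
  refine setIntegral_congr_fun measurableSet_Ioi fun s (hs : 1 < s) => ?_
  rw [add_rpow_mul_rpow_comp_mul hC hR (one_pos.trans hs).le, ← mul_assoc, hRpow, one_mul]

end RadialIntegral

theorem csSup_eq_of_forall_le_of_tendsto {f : ℝ → ℝ} {L : ℝ} (hle : ∀ R, 0 < R → f R ≤ L)
    (hf : Tendsto f atTop (𝓝 L)) : sSup {y | ∃ R, 0 < R ∧ y = f R} = L := by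
  have hbdd : ∀ y ∈ {y | ∃ R, 0 < R ∧ y = f R}, y ≤ L := by
    rintro y ⟨R, hR, rfl⟩
    exact hle R hR
  refine le_antisymm (csSup_le ⟨_, 1, one_pos, rfl⟩ hbdd) (le_of_tendsto hf ?_)
  filter_upwards [eventually_gt_atTop 0] with R hR
  exact le_csSup ⟨L, hbdd⟩ ⟨R, hR, rfl⟩

section Barenblatt

variable {d : ℕ} {γ σ p C : ℝ}

theorem rpow_mul_weightedTail_eq_unitSphereArea_mul (hd : 1 ≤ d) (hC : 0 ≤ C) {R : ℝ}
    (hR : 0 < R) :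
    R ^ (σ * p - ((d : ℝ) - γ)) * weightedTail d γ (fun x => (C + ‖x‖ ^ σ) ^ (-p)) R
      = unitSphereArea d
        * ∫ s in Ioi (1 : ℝ), (C * R ^ (-σ) + s ^ σ) ^ (-p) * s ^ ((d : ℝ) - 1 - γ) := by
  have : Nontrivial (EuclideanSpace ℝ (Fin d)) := by
    have : Nonempty (Fin d) := ⟨⟨0, hd⟩⟩
    infer_instance
  have hradial : ∫ r in Ioi R, r ^ ((d : ℝ) - 1) * (|(C + r ^ σ) ^ (-p)| * r ^ (-γ))
      = ∫ r in Ioi R, (C + r ^ σ) ^ (-p) * r ^ ((d : ℝ) - 1 - γ) := by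
    refine setIntegral_congr_fun measurableSet_Ioi fun r (hr : R < r) => ?_
    have hr0 : 0 < r := hR.trans hr
    rw [abs_of_nonneg (by positivity), sub_eq_add_neg _ γ, rpow_add hr0]
    ring
  rw [weightedTail, setIntegral_le_norm_eq_unitSphereArea_mul
      (fun r => |(C + r ^ σ) ^ (-p)| * r ^ (-γ)) hR, finrank_euclideanSpace_fin, hradial,
    mul_left_comm, show (d : ℝ) - γ = (d : ℝ) - 1 - γ + 1 by ring,
    rpow_mul_integral_Ioi_add_rpow hC hR]

theorem rpow_mul_weightedTail_le (hd : 1 ≤ d) (hC : 0 ≤ C) (hp : 0 ≤ p)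
    (hκ : (d : ℝ) - γ < σ * p) {R : ℝ} (hR : 0 < R) :
    R ^ (σ * p - ((d : ℝ) - γ)) * weightedTail d γ (fun x => (C + ‖x‖ ^ σ) ^ (-p)) R
      ≤ unitSphereArea d / (σ * p - ((d : ℝ) - γ)) := by
  have hint := integral_Ioi_one_add_rpow_le (σ := σ) (e := (d : ℝ) - 1 - γ) hp (by linarith)
    (mul_nonneg hC (rpow_pos_of_pos hR (-σ)).le)
  rw [show (d : ℝ) - 1 - γ + 1 = d - γ by ring] at hint
  rw [rpow_mul_weightedTail_eq_unitSphereArea_mul hd hC hR, ← mul_one_div]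
  exact mul_le_mul_of_nonneg_left hint (unitSphereArea_nonneg d)

theorem tendsto_rpow_mul_weightedTail (hd : 1 ≤ d) (hC : 0 ≤ C) (hσ : 0 < σ) (hp : 0 ≤ p)
    (hκ : (d : ℝ) - γ < σ * p) :
    Tendsto (fun R => R ^ (σ * p - ((d : ℝ) - γ))
        * weightedTail d γ (fun x => (C + ‖x‖ ^ σ) ^ (-p)) R)
      atTop (𝓝 (unitSphereArea d / (σ * p - ((d : ℝ) - γ)))) := by
  have hlim := tendsto_integral_Ioi_one_add_rpow (σ := σ) (e := (d : ℝ) - 1 - γ) hp (by linarith)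
  rw [show (d : ℝ) - 1 - γ + 1 = d - γ by ring] at hlim
  have hCR : Tendsto (fun R : ℝ => C * R ^ (-σ)) atTop (𝓝[≥] 0) := by
    refine tendsto_nhdsWithin_of_tendsto_nhds_of_eventually_within _ ?_ ?_
    · simpa using (tendsto_rpow_neg_atTop hσ).const_mul C
    · filter_upwards [eventually_gt_atTop 0] with R hR
      exact mul_nonneg hC (rpow_pos_of_pos hR _).le
  rw [← mul_one_div]
  refine ((hlim.comp hCR).const_mul _).congr' ?_
  filter_upwards [eventually_gt_atTop 0] with R hR
  exact (rpow_mul_weightedTail_eq_unitSphereArea_mul hd hC hR).symm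

end Barenblatt

theorem sub_lt_mul_one_div_one_sub {n γ β m : ℝ} (hγ : γ < n)
    (hm1 : (n - 2 - β) / (n - γ) < m) (hm2 : m < 1) :
    n - γ < (2 + β - γ) * (1 / (1 - m)) := by
  have := (div_lt_iff₀ (sub_pos.2 hγ)).1 hm1
  rw [mul_one_div, lt_div_iff₀ (sub_pos.2 hm2)]
  linarith

theorem one_sub_mul_one_div_eq {n γ β m : ℝ} (hγ : γ < n)
    (hm1 : (n - 2 - β) / (n - γ) < m) (hm2 : m < 1) :
    (1 - m) * (1 / ((n - γ) * (m - (n - 2 - β) / (n - γ))))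
      = 1 / ((2 + β - γ) * (1 / (1 - m)) - (n - γ)) := by
  have hnγ : n - γ ≠ 0 := (sub_pos.2 hγ).ne'
  have h1m : 1 - m ≠ 0 := (sub_pos.2 hm2).ne'
  have hD : (n - γ) * (m - (n - 2 - β) / (n - γ)) = m * (n - γ) - (n - 2 - β) := by
    field_simp
  have hκ : (2 + β - γ) * (1 / (1 - m)) - (n - γ) = (m * (n - γ) - (n - 2 - β)) / (1 - m) := by
    field_simp
    ring
  have hD0 : m * (n - γ) - (n - 2 - β) ≠ 0 := by
    have := (div_lt_iff₀ (sub_pos.2 hγ)).1 hm1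
    linarith
  rw [hD, hκ]
  field_simp

theorem barenblatt_tail_seminorm_general
    (d : ℕ) (hd : 3 ≤ d) (γ β m : ℝ)
    (hγ : γ < d)
    (hm1 : ((d : ℝ) - 2 - β) / ((d : ℝ) - γ) < m) (hm2 : m < 1)
    (σ ϑ : ℝ) (hσ : σ = 2 + β - γ)
    (hϑ : ϑ = 1 / (((d : ℝ) - γ) * (m - ((d : ℝ) - 2 - β) / ((d : ℝ) - γ))))
    (C : ℝ) (hC : 0 < C)
    (ℬ : EuclideanSpace ℝ (Fin d) → ℝ)
    (hℬ : ∀ x : EuclideanSpace ℝ (Fin d), ℬ x = (C + ‖x‖ ^ σ) ^ (-(1 / (1 - m)))) :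
    sSup {y : ℝ | ∃ R : ℝ, 0 < R ∧
        y = R ^ (σ / (1 - m) - ((d : ℝ) - γ)) * weightedTail d γ ℬ R}
      = (1 - m) * ϑ * (2 * π ^ ((d : ℝ) / 2) / Real.Gamma ((d : ℝ) / 2)) ∧
    Tendsto (fun R : ℝ => R ^ (σ / (1 - m) - ((d : ℝ) - γ)) * weightedTail d γ ℬ R)
      atTop
      (nhds ((1 - m) * ϑ * (2 * π ^ ((d : ℝ) / 2) / Real.Gamma ((d : ℝ) / 2)))) := by
  have hd1 : 1 ≤ d := by omega
  have hp : 0 ≤ 1 / (1 - m) := (one_div_pos.2 (sub_pos.2 hm2)).le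
  have hκ : (d : ℝ) - γ < σ * (1 / (1 - m)) := hσ ▸ sub_lt_mul_one_div_one_sub hγ hm1 hm2
  have hσ0 : 0 < σ := pos_of_mul_pos_left ((sub_pos.2 hγ).trans hκ) hp
  have hlimit : (1 - m) * ϑ * (2 * π ^ ((d : ℝ) / 2) / Real.Gamma ((d : ℝ) / 2))
      = unitSphereArea d / (σ * (1 / (1 - m)) - ((d : ℝ) - γ)) := by
    rw [hϑ, one_sub_mul_one_div_eq hγ hm1 hm2, ← hσ, mul_comm, mul_one_div]
    rfl
  rw [hlimit, div_eq_mul_one_div σ, show ℬ = _ from funext hℬ]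
  have hT := tendsto_rpow_mul_weightedTail hd1 hC.le hσ0 hp hκ
  exact ⟨csSup_eq_of_forall_le_of_tendsto
    (fun R hR => rpow_mul_weightedTail_le hd1 hC.le hp hκ hR) hT, hT⟩

/-- The tail seminorm of the Barenblatt profile `ℬ(x) = (C + |x|^σ)^{-1/(1-m)}` is
`(1-m) ϑ |𝕊^{d-1}|`, and is attained in the limit `R → ∞`. -/
theorem barenblatt_tail_seminorm
    (d : ℕ) (hd : 3 ≤ d) (γ β m : ℝ)
    (hγ : γ < d) (hβ1 : γ - 2 < β) (hβ2 : β ≤ γ * ((d : ℝ) - 2) / d)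
    (hm1 : ((d : ℝ) - 2 - β) / ((d : ℝ) - γ) < m) (hm2 : m < 1)
    (σ ϑ : ℝ) (hσ : σ = 2 + β - γ)
    (hϑ : ϑ = 1 / (((d : ℝ) - γ) * (m - ((d : ℝ) - 2 - β) / ((d : ℝ) - γ))))
    (C : ℝ) (hC : 0 < C)
    (ℬ : EuclideanSpace ℝ (Fin d) → ℝ)
    (hℬ : ∀ x : EuclideanSpace ℝ (Fin d), ℬ x = (C + ‖x‖ ^ σ) ^ (-(1 / (1 - m)))) :
    sSup {y : ℝ | ∃ R : ℝ, 0 < R ∧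
        y = R ^ (σ / (1 - m) - ((d : ℝ) - γ)) * weightedTail d γ ℬ R}
      = (1 - m) * ϑ * (2 * π ^ ((d : ℝ) / 2) / Real.Gamma ((d : ℝ) / 2)) ∧
    Tendsto (fun R : ℝ => R ^ (σ / (1 - m) - ((d : ℝ) - γ)) * weightedTail d γ ℬ R)
      atTop
      (nhds ((1 - m) * ϑ * (2 * π ^ ((d : ℝ) / 2) / Real.Gamma ((d : ℝ) / 2)))) :=
  barenblatt_tail_seminorm_general d hd γ β m hγ hm1 hm2 σ ϑ hσ hϑ C hC ℬ hℬ
end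

section
/- There exist constants c, C > 0 depending only on d and γ such that for every x_0 ∈ ℝ^d and every R > 0, c R^d (max{|x_0|, R/2})^{−γ} ≤ μ_γ(B_R(x_0)) ≤ C R^d (max{|x_0|, R/2})^{−γ}. -/
/-!
On a ball all of whose points have norm between `M / k` and `k * M`, the weight `‖x‖ ^ (-γ)` lies
between `k ^ (-|γ|) * M ^ (-γ)` and `k ^ |γ| * M ^ (-γ)`, so its integral is comparable to
`M ^ (-γ)` times the volume of the ball. With `M = max ‖x₀‖ (R / 2)`: for the lower bound,
`B_R(x₀)` contains the ball of radius `R / 4` around the point at distance `R / 2` from `x₀`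
pushed away from the origin, and there `‖x‖` is comparable to `M`. For the upper bound, if
`‖x₀‖ ≥ 2R` the same comparison applies to `B_R(x₀)` itself; otherwise `B_R(x₀) ⊆ B_{3R}(0)`, and
homogeneity of the weight gives `μ_γ(B_r(0)) = r ^ (d - γ) μ_γ(B_1(0))`, which is finite as `γ < d`.
-/

open MeasureTheory Metric Set Module Real

lemma rpow_mem_Icc_of_mem_Icc {M k t : ℝ} (β : ℝ) (hM : 0 < M) (hk : 1 ≤ k)
    (ht : t ∈ Icc (M / k) (k * M)) : t ^ β ∈ Icc (k ^ (-|β|) * M ^ β) (k ^ |β| * M ^ β) := by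
  have hk₀ : 0 < k := one_pos.trans_le hk
  have ht₀ : 0 < t := (div_pos hM hk₀).trans_le ht.1
  have hlog : |log t - log M| ≤ log k := by
    have h₁ := log_le_log (div_pos hM hk₀) ht.1
    have h₂ := log_le_log ht₀ ht.2
    rw [log_div hM.ne' hk₀.ne'] at h₁
    rw [log_mul hk₀.ne' hM.ne'] at h₂
    exact abs_le.2 ⟨by linarith, by linarith⟩
  have key : |(log t - log M) * β| ≤ log k * |β| := by
    rw [abs_mul]; gcongr
  rw [abs_le] at key
  simp only [mem_Icc, rpow_def_of_pos ht₀, rpow_def_of_pos hk₀, rpow_def_of_pos hM, ← exp_add,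
    exp_le_exp]
  constructor <;> linarith

section NormedSpace

variable {E : Type*} [NormedAddCommGroup E] [NormedSpace ℝ E] [Nontrivial E]

lemma exists_dist_eq_and_norm_eq_add (x : E) {s : ℝ} (hs : 0 ≤ s) :
    ∃ y : E, dist y x = s ∧ ‖y‖ = ‖x‖ + s := by
  rcases eq_or_ne x 0 with rfl | hx
  · obtain ⟨y, hy⟩ := exists_norm_eq E hs
    exact ⟨y, by simpa using hy, by simpa using hy⟩
  · have hx' : 0 < ‖x‖ := norm_pos_iff.2 hx
    refine ⟨(1 + s / ‖x‖) • x, ?_, ?_⟩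
    · rw [dist_eq_norm, add_smul, one_smul, add_sub_cancel_left, norm_smul,
        norm_of_nonneg (by positivity), div_mul_cancel₀ _ hx'.ne']
    · rw [norm_smul, norm_of_nonneg (by positivity), add_mul, one_mul,
        div_mul_cancel₀ _ hx'.ne']

lemma exists_ball_subset_ball_norm_mem_Icc (x₀ : E) {R : ℝ} (hR : 0 < R) :
    ∃ y : E, ball y (R / 4) ⊆ ball x₀ R ∧
      ∀ x ∈ ball y (R / 4), ‖x‖ ∈ Icc (max ‖x₀‖ (R / 2) / 3) (3 * max ‖x₀‖ (R / 2)) := by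
  obtain ⟨y, hyx, hy⟩ := exists_dist_eq_and_norm_eq_add x₀ (by positivity : 0 ≤ R / 2)
  refine ⟨y, ball_subset_ball' (by linarith), fun x hx ↦ ?_⟩
  have hM : max ‖x₀‖ (R / 2) ≤ ‖x₀‖ + R / 2 :=
    max_le (by linarith) (by linarith [norm_nonneg x₀])
  have hx' := abs_le.1 ((abs_norm_sub_norm_le x y).trans (mem_ball_iff_norm.1 hx).le)
  constructor <;> linarith [le_max_left ‖x₀‖ (R / 2), le_max_right ‖x₀‖ (R / 2)]

end NormedSpace

lemma measureReal_ball_pos {X : Type*} [PseudoMetricSpace X] [ProperSpace X] [MeasurableSpace X]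
    (μ : Measure X) [μ.IsOpenPosMeasure] [IsFiniteMeasureOnCompacts μ] (x : X) {r : ℝ}
    (hr : 0 < r) : 0 < μ.real (ball x r) :=
  ENNReal.toReal_pos (measure_ball_pos μ x hr).ne' measure_ball_lt_top.ne

section HaarMeasure

variable {E : Type*} [NormedAddCommGroup E] [NormedSpace ℝ E] [FiniteDimensional ℝ E]
  [MeasurableSpace E] [BorelSpace E] (μ : Measure E) [μ.IsAddHaarMeasure]

lemma addHaar_real_ball_of_pos (x : E) {r : ℝ} (hr : 0 < r) :
    μ.real (ball x r) = r ^ finrank ℝ E * μ.real (ball 0 1) := by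
  rw [measureReal_def, Measure.addHaar_ball_of_pos μ x hr, ENNReal.toReal_mul,
    ENNReal.toReal_ofReal (by positivity), measureReal_def]

variable {μ}

lemma integrableOn_ball_norm_rpow [Nontrivial E] {γ : ℝ} (hγ : γ < finrank ℝ E) (x₀ : E)
    (R : ℝ) : IntegrableOn (fun x : E ↦ ‖x‖ ^ (-γ)) (ball x₀ R) μ := by
  have hloc : LocallyIntegrable (fun x : E ↦ ‖x‖ ^ (-γ)) μ :=
    locallyIntegrable_of_norm_le_rpow finrank_pos (C := 1) hγ
      (.of_forall fun x ↦ by rw [one_mul, norm_of_nonneg (by positivity)])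
      (measurable_norm.pow_const _).aestronglyMeasurable
  exact (hloc.integrableOn_isCompact (isCompact_closedBall x₀ R)).mono_set ball_subset_closedBall

variable (μ) in
lemma setIntegral_ball_zero_norm_rpow (γ : ℝ) {r : ℝ} (hr : 0 < r) :
    ∫ x in ball (0 : E) r, ‖x‖ ^ (-γ) ∂μ =
      r ^ finrank ℝ E * r ^ (-γ) * ∫ x in ball (0 : E) 1, ‖x‖ ^ (-γ) ∂μ := by
  have h := Measure.setIntegral_comp_smul_of_pos μ (fun x : E ↦ ‖x‖ ^ (-γ)) (ball 0 1) hr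
  simp only [smul_unitBall_of_pos hr, norm_smul, norm_of_nonneg hr.le,
    mul_rpow hr.le (norm_nonneg _), integral_const_mul, smul_eq_mul] at h
  rw [mul_assoc, h, mul_inv_cancel_left₀ (by positivity)]

variable [Nontrivial E] {γ : ℝ}

lemma setIntegral_ball_norm_rpow_mem_Icc {y : E} {ρ M k : ℝ} (hγ : γ < finrank ℝ E)
    (hM : 0 < M) (hk : 1 ≤ k) (hnorm : ∀ x ∈ ball y ρ, ‖x‖ ∈ Icc (M / k) (k * M)) :
    ∫ x in ball y ρ, ‖x‖ ^ (-γ) ∂μ ∈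
      Icc (k ^ (-|γ|) * M ^ (-γ) * μ.real (ball y ρ))
        (k ^ |γ| * M ^ (-γ) * μ.real (ball y ρ)) := by
  have hbound x (hx : x ∈ ball y ρ) :=
    abs_neg γ ▸ rpow_mem_Icc_of_mem_Icc (-γ) hM hk (hnorm x hx)
  refine ⟨setIntegral_ge_of_const_le_real measurableSet_ball measure_ball_lt_top.ne
    (fun x hx ↦ (hbound x hx).1) (integrableOn_ball_norm_rpow hγ y ρ), ?_⟩
  calc ∫ x in ball y ρ, ‖x‖ ^ (-γ) ∂μ ≤ ∫ _ in ball y ρ, k ^ |γ| * M ^ (-γ) ∂μ :=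
        setIntegral_mono_on (integrableOn_ball_norm_rpow hγ y ρ)
          (integrableOn_const measure_ball_lt_top.ne) measurableSet_ball
          (fun x hx ↦ (hbound x hx).2)
    _ = k ^ |γ| * M ^ (-γ) * μ.real (ball y ρ) := by
        rw [setIntegral_const, smul_eq_mul, mul_comm]

variable (μ) in
theorem exists_mul_le_setIntegral_ball_norm_rpow (hγ : γ < finrank ℝ E) :
    ∃ c > 0, ∀ (x₀ : E) (R : ℝ), 0 < R →
      c * R ^ finrank ℝ E * max ‖x₀‖ (R / 2) ^ (-γ) ≤ ∫ x in ball x₀ R, ‖x‖ ^ (-γ) ∂μ := by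
  refine ⟨3 ^ (-|γ|) * (4 ^ finrank ℝ E)⁻¹ * μ.real (ball 0 1), ?_, fun x₀ R hR ↦ ?_⟩
  · have := measureReal_ball_pos μ (0 : E) one_pos
    positivity
  obtain ⟨y, hsub, hnorm⟩ := exists_ball_subset_ball_norm_mem_Icc x₀ hR
  have hM : 0 < max ‖x₀‖ (R / 2) := lt_max_of_lt_right (by positivity)
  calc _ = 3 ^ (-|γ|) * max ‖x₀‖ (R / 2) ^ (-γ) * μ.real (ball y (R / 4)) := by
        rw [addHaar_real_ball_of_pos μ y (by positivity), div_pow]; ring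
    _ ≤ ∫ x in ball y (R / 4), ‖x‖ ^ (-γ) ∂μ :=
        (setIntegral_ball_norm_rpow_mem_Icc hγ hM (by norm_num) hnorm).1
    _ ≤ ∫ x in ball x₀ R, ‖x‖ ^ (-γ) ∂μ :=
        setIntegral_mono_set (integrableOn_ball_norm_rpow hγ x₀ R)
          (.of_forall fun x ↦ by positivity) hsub.eventuallyLE

lemma setIntegral_ball_norm_rpow_le_of_norm_le {x₀ : E} {R : ℝ} (hγ : γ < finrank ℝ E)
    (hR : 0 < R) (hx₀ : ‖x₀‖ ≤ 2 * R) :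
    ∫ x in ball x₀ R, ‖x‖ ^ (-γ) ∂μ ≤ 3 ^ finrank ℝ E * 6 ^ |γ| *
      (∫ x in ball (0 : E) 1, ‖x‖ ^ (-γ) ∂μ) * R ^ finrank ℝ E * max ‖x₀‖ (R / 2) ^ (-γ) := by
  have hM : 0 < max ‖x₀‖ (R / 2) := lt_max_of_lt_right (by positivity)
  have h3R : 3 * R ∈ Icc (max ‖x₀‖ (R / 2) / 6) (6 * max ‖x₀‖ (R / 2)) := by
    constructor
    · linarith [max_le hx₀ (by linarith : R / 2 ≤ 2 * R)]
    · linarith [le_max_right ‖x₀‖ (R / 2)]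
  calc ∫ x in ball x₀ R, ‖x‖ ^ (-γ) ∂μ ≤ ∫ x in ball 0 (3 * R), ‖x‖ ^ (-γ) ∂μ :=
        setIntegral_mono_set (integrableOn_ball_norm_rpow hγ 0 (3 * R))
          (.of_forall fun x ↦ by positivity)
          (ball_subset_ball' (by rw [dist_zero_right]; linarith)).eventuallyLE
    _ = 3 ^ finrank ℝ E * (∫ x in ball (0 : E) 1, ‖x‖ ^ (-γ) ∂μ) * R ^ finrank ℝ E *
          (3 * R) ^ (-γ) := by
        rw [setIntegral_ball_zero_norm_rpow μ γ (by positivity), mul_pow]; ring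
    _ ≤ 3 ^ finrank ℝ E * (∫ x in ball (0 : E) 1, ‖x‖ ^ (-γ) ∂μ) * R ^ finrank ℝ E *
          (6 ^ |γ| * max ‖x₀‖ (R / 2) ^ (-γ)) := by
        gcongr
        exact abs_neg γ ▸ (rpow_mem_Icc_of_mem_Icc (-γ) hM (by norm_num) h3R).2
    _ = _ := by ring

lemma setIntegral_ball_norm_rpow_le_of_le_norm {x₀ : E} {R : ℝ} (hγ : γ < finrank ℝ E)
    (hR : 0 < R) (hx₀ : 2 * R ≤ ‖x₀‖) :
    ∫ x in ball x₀ R, ‖x‖ ^ (-γ) ∂μ ≤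
      2 ^ |γ| * μ.real (ball 0 1) * R ^ finrank ℝ E * ‖x₀‖ ^ (-γ) := by
  have hnorm : ∀ x ∈ ball x₀ R, ‖x‖ ∈ Icc (‖x₀‖ / 2) (2 * ‖x₀‖) := fun x hx ↦ by
    have hx' := abs_le.1 ((abs_norm_sub_norm_le x x₀).trans (mem_ball_iff_norm.1 hx).le)
    constructor <;> linarith
  calc _ ≤ 2 ^ |γ| * ‖x₀‖ ^ (-γ) * μ.real (ball x₀ R) :=
        (setIntegral_ball_norm_rpow_mem_Icc hγ (by linarith) (by norm_num) hnorm).2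
    _ = _ := by rw [addHaar_real_ball_of_pos μ x₀ hR]; ring

variable (μ) in
theorem exists_setIntegral_ball_norm_rpow_le (hγ : γ < finrank ℝ E) :
    ∃ C > 0, ∀ (x₀ : E) (R : ℝ), 0 < R →
      ∫ x in ball x₀ R, ‖x‖ ^ (-γ) ∂μ ≤ C * R ^ finrank ℝ E * max ‖x₀‖ (R / 2) ^ (-γ) := by
  have hv := measureReal_ball_pos μ (0 : E) one_pos
  refine ⟨max (3 ^ finrank ℝ E * 6 ^ |γ| * ∫ x in ball (0 : E) 1, ‖x‖ ^ (-γ) ∂μ)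
    (2 ^ |γ| * μ.real (ball 0 1)), lt_max_of_lt_right (by positivity), fun x₀ R hR ↦ ?_⟩
  rcases le_total ‖x₀‖ (2 * R) with hnear | hfar
  · refine (setIntegral_ball_norm_rpow_le_of_norm_le hγ hR hnear).trans ?_
    gcongr
    exact le_max_left _ _
  · rw [max_eq_left (by linarith : R / 2 ≤ ‖x₀‖)]
    refine (setIntegral_ball_norm_rpow_le_of_le_norm hγ hR hfar).trans ?_
    gcongr
    exact le_max_right _ _

end HaarMeasure

/-- Two-sided bound for the weighted measure of Euclidean balls:
`μ_γ(B_R(x₀)) ≍ R^d (max{|x₀|, R/2})^{-γ}`. -/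
theorem weighted_measure_ball
    (d : ℕ) (hd : 3 ≤ d) (γ : ℝ) (hγ : γ < d) :
    ∃ c > (0 : ℝ), ∃ C > (0 : ℝ),
      ∀ x₀ : EuclideanSpace ℝ (Fin d), ∀ R : ℝ, 0 < R →
        c * R ^ (d : ℝ) * (max ‖x₀‖ (R / 2)) ^ (-γ) ≤
            (∫ x in Metric.ball x₀ R, ‖x‖ ^ (-γ)) ∧
          (∫ x in Metric.ball x₀ R, ‖x‖ ^ (-γ)) ≤
            C * R ^ (d : ℝ) * (max ‖x₀‖ (R / 2)) ^ (-γ) := by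
  have : Nonempty (Fin d) := ⟨⟨0, by omega⟩⟩
  have hdim : finrank ℝ (EuclideanSpace ℝ (Fin d)) = d := finrank_euclideanSpace_fin
  obtain ⟨c, hc, hlower⟩ := exists_mul_le_setIntegral_ball_norm_rpow volume (hdim ▸ hγ)
  obtain ⟨C, hC, hupper⟩ := exists_setIntegral_ball_norm_rpow_le volume (hdim ▸ hγ)
  refine ⟨c, hc, C, hC, fun x₀ R hR ↦ ?_⟩
  rw [hdim] at hlower hupper
  rw [rpow_natCast]
  exact ⟨hlower x₀ R hR, hupper x₀ R hR⟩
end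

section
/- (a) ∫_{ℝ^d} |x|^{2/(1−m)} f(x) dx < ∞; (b) f satisfies the integral tail condition: sup_{R>0} R^{2/(1−m)−d} ∫_{{|x| ≥ R}} f(x) dx < ∞; (c) nevertheless f fails every pointwise Barenblatt-type decay bound: limsup_{|x|→∞} |x|^{2/(1−m)} f(x) = +∞, i.e. for all A > 0 and R > 0 there exists x ∈ ℝ^d with |x| ≥ R and f(x) > A |x|^{−2/(1−m)}. -/
/-!
With `p = 2/(1-m)` and `n = N + 2`, the function is a sum of spikes of height `n^(1-p)` on
disjoint balls of radius `n^(-2)` around `n e₁`. The `n`-th spike contributes about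
`n^p · n^(1-p) · n^(-2d) = n^(1-2d)` to the `p`-th moment, which is summable, and the moment
bound gives the tail condition by Chebyshev's inequality because `p ≥ d` and `f` vanishes
on the unit ball. At the centres, however, `|x|^p f(x) = n` is unbounded.
-/

open MeasureTheory Real Set Filter Function

section DisjointIndicatorSum

variable {α : Type*} {s : ℕ → Set α} {w : ℕ → ℝ}

theorem tsum_indicator_const_apply_of_mem (hs : Pairwise (Disjoint on s)) {x : α} {n : ℕ}
    (hx : x ∈ s n) : ∑' k, (s k).indicator (fun _ => w k) x = w n := by
  rw [tsum_eq_single n fun k hk => indicator_of_notMem (disjoint_right.1 (hs hk) hx) _]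
  exact indicator_of_mem hx _

theorem tsum_indicator_const_apply_of_forall_notMem {x : α} (hx : ∀ n, x ∉ s n) :
    ∑' k, (s k).indicator (fun _ => w k) x = 0 := by
  simp [indicator_of_notMem, hx]

theorem summable_indicator_const_apply (hs : Pairwise (Disjoint on s)) (x : α) :
    Summable fun k => (s k).indicator (fun _ => w k) x := by
  refine summable_of_hasFiniteSupport (Set.Subsingleton.finite fun a ha b hb => ?_)
  by_contra hab
  exact disjoint_left.1 (hs hab) (mem_of_indicator_ne_zero ha) (mem_of_indicator_ne_zero hb)

variable [MeasurableSpace α]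

theorem measurable_tsum_indicator_const (hs : Pairwise (Disjoint on s))
    (hsm : ∀ n, MeasurableSet (s n)) :
    Measurable fun x => ∑' k, (s k).indicator (fun _ => w k) x :=
  measurable_of_tendsto_metrizable
    (fun n => Finset.measurable_sum (Finset.range n) fun k _ => measurable_const.indicator (hsm k))
    (tendsto_pi_nhds.2 fun x => (summable_indicator_const_apply hs x).hasSum.tendsto_sum_nat)

theorem lintegral_ofReal_mul_tsum_indicator_const_le (μ : Measure α)
    (hs : Pairwise (Disjoint on s)) (hsm : ∀ n, MeasurableSet (s n)) {g : α → ℝ} {b : ℕ → ℝ}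
    (hb : ∀ n, ∀ x ∈ s n, g x * w n ≤ b n) :
    ∫⁻ x, ENNReal.ofReal (g x * ∑' k, (s k).indicator (fun _ => w k) x) ∂μ ≤
      ∑' n, ENNReal.ofReal (b n) * μ (s n) := by
  have hpt : ∀ x, ENNReal.ofReal (g x * ∑' k, (s k).indicator (fun _ => w k) x) ≤
      ∑' n, (s n).indicator (fun _ => ENNReal.ofReal (b n)) x := by
    intro x
    by_cases hx : ∃ n, x ∈ s n
    · obtain ⟨n, hxn⟩ := hx
      rw [tsum_indicator_const_apply_of_mem hs hxn]
      calc ENNReal.ofReal (g x * w n) ≤ (s n).indicator (fun _ => ENNReal.ofReal (b n)) x := by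
            rw [indicator_of_mem hxn]; exact ENNReal.ofReal_le_ofReal (hb n x hxn)
        _ ≤ _ := ENNReal.le_tsum n
    · rw [not_exists] at hx
      simp [tsum_indicator_const_apply_of_forall_notMem hx]
  calc _ ≤ ∫⁻ x, ∑' n, (s n).indicator (fun _ => ENNReal.ofReal (b n)) x ∂μ := lintegral_mono hpt
    _ = _ := by
      rw [lintegral_tsum fun n => (measurable_const.indicator (hsm n)).aemeasurable]
      simp_rw [lintegral_indicator_const (hsm _)]

end DisjointIndicatorSum

section TailBound

variable {E : Type*} [NormedAddCommGroup E] [MeasurableSpace E] [OpensMeasurableSpace E]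
  {μ : Measure E} {f : E → ℝ} {p : ℝ}

theorem rpow_mul_setIntegral_norm_ge_le_integral (hf : 0 ≤ f) (hp : 0 ≤ p) {R : ℝ} (hR : 0 ≤ R)
    (hg : Integrable (fun x => ‖x‖ ^ p * f x) μ) :
    R ^ p * ∫ x in {x | R ≤ ‖x‖}, f x ∂μ ≤ ∫ x, ‖x‖ ^ p * f x ∂μ := by
  have hS : MeasurableSet {x : E | R ≤ ‖x‖} := measurableSet_le measurable_const measurable_norm
  rw [← integral_const_mul]
  calc ∫ x in {x | R ≤ ‖x‖}, R ^ p * f x ∂μ ≤ ∫ x in {x | R ≤ ‖x‖}, ‖x‖ ^ p * f x ∂μ :=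
        integral_mono_of_nonneg (Eventually.of_forall fun x => mul_nonneg (rpow_nonneg hR p) (hf x))
          hg.integrableOn ((ae_restrict_iff' hS).2 (Eventually.of_forall fun x hx =>
            mul_le_mul_of_nonneg_right (rpow_le_rpow hR hx hp) (hf x)))
    _ ≤ _ := setIntegral_le_integral hg
        (Eventually.of_forall fun x => mul_nonneg (rpow_nonneg (norm_nonneg x) p) (hf x))

theorem rpow_mul_setIntegral_norm_ge_le_integral_of_le (hf : 0 ≤ f)
    (hf₁ : ∀ x, ‖x‖ < 1 → f x = 0) {q : ℝ} (hq : 0 ≤ q) (hqp : q ≤ p) {R : ℝ} (hR : 0 ≤ R)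
    (hg : Integrable (fun x => ‖x‖ ^ p * f x) μ) :
    R ^ q * ∫ x in {x | R ≤ ‖x‖}, f x ∂μ ≤ ∫ x, ‖x‖ ^ p * f x ∂μ := by
  have hS : MeasurableSet {x : E | R ≤ ‖x‖} := measurableSet_le measurable_const measurable_norm
  have htail_nonneg : 0 ≤ ∫ x in {x | R ≤ ‖x‖}, f x ∂μ := setIntegral_nonneg hS fun x _ => hf x
  rcases le_total 1 R with h1R | hR1
  · calc R ^ q * ∫ x in {x | R ≤ ‖x‖}, f x ∂μ ≤ R ^ p * ∫ x in {x | R ≤ ‖x‖}, f x ∂μ :=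
          mul_le_mul_of_nonneg_right (rpow_le_rpow_of_exponent_le h1R hqp) htail_nonneg
      _ ≤ _ := rpow_mul_setIntegral_norm_ge_le_integral hf (hq.trans hqp) hR hg
  · have htail : ∫ x in {x | R ≤ ‖x‖}, f x ∂μ = ∫ x in {x | 1 ≤ ‖x‖}, f x ∂μ :=
      setIntegral_eq_of_subset_of_forall_sdiff_eq_zero hS (fun x hx => hR1.trans hx)
        fun x hx => hf₁ x (not_le.1 hx.2)
    calc R ^ q * ∫ x in {x | R ≤ ‖x‖}, f x ∂μ ≤ 1 ^ p * ∫ x in {x | 1 ≤ ‖x‖}, f x ∂μ := by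
          rw [one_rpow, one_mul, ← htail]
          exact mul_le_of_le_one_left htail_nonneg (rpow_le_one hR hR1 hq)
      _ ≤ _ := rpow_mul_setIntegral_norm_ge_le_integral hf (hq.trans hqp) zero_le_one hg

end TailBound

section Spikes

theorem natCast_add_two_rpow_neg_two_le (N : ℕ) : ((N + 2 : ℕ) : ℝ) ^ (-2 : ℝ) ≤ 1 / 2 :=
  calc ((N + 2 : ℕ) : ℝ) ^ (-2 : ℝ) ≤ 2 ^ (-2 : ℝ) :=
        rpow_le_rpow_of_nonpos two_pos (by push_cast; linarith [N.cast_nonneg (α := ℝ)])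
          (by norm_num)
    _ ≤ 1 / 2 := by rw [rpow_neg two_pos.le, rpow_two]; norm_num

theorem natCast_add_two_mul_rpow_neg_two_pow (N k : ℕ) :
    ((N + 2 : ℕ) : ℝ) * (((N + 2 : ℕ) : ℝ) ^ (-2 : ℝ)) ^ k =
      ((N + 2 : ℕ) : ℝ) ^ (1 - 2 * k : ℝ) := by
  have hn : (0 : ℝ) < (N + 2 : ℕ) := by positivity
  rw [show (1 - 2 * k : ℝ) = 1 + (-2) * k by ring, rpow_add hn, rpow_one, rpow_mul hn.le,
    rpow_natCast]

variable {d : ℕ} (i : Fin d)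

def spikeBall (N : ℕ) : Set (EuclideanSpace ℝ (Fin d)) :=
  Metric.ball (EuclideanSpace.single i ((N + 2 : ℕ) : ℝ)) (((N + 2 : ℕ) : ℝ) ^ (-2 : ℝ))

noncomputable def spikeSum (p : ℝ) (x : EuclideanSpace ℝ (Fin d)) : ℝ :=
  ∑' N : ℕ, (spikeBall i N).indicator (fun _ => ((N + 2 : ℕ) : ℝ) ^ (-(p - 1))) x

theorem norm_single_natCast_add_two (N : ℕ) :
    ‖EuclideanSpace.single i ((N + 2 : ℕ) : ℝ)‖ = ((N + 2 : ℕ) : ℝ) := by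
  rw [PiLp.norm_single, Real.norm_natCast]

theorem pairwise_disjoint_spikeBall : Pairwise (Disjoint on spikeBall i) := by
  intro N M hNM
  refine Metric.ball_disjoint_ball ?_
  have hNM' : (1 : ℝ) ≤ |((N + 2 : ℕ) : ℝ) - ((M + 2 : ℕ) : ℝ)| := by
    have h : (1 : ℤ) ≤ |((N + 2 : ℕ) : ℤ) - ((M + 2 : ℕ) : ℤ)| :=
      Int.one_le_abs (sub_ne_zero.2 (by omega))
    exact_mod_cast h
  rw [PiLp.dist_single_same, Real.dist_eq]
  linarith [natCast_add_two_rpow_neg_two_le N, natCast_add_two_rpow_neg_two_le M]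

theorem abs_norm_sub_lt_of_mem_spikeBall {N : ℕ} {x : EuclideanSpace ℝ (Fin d)}
    (hx : x ∈ spikeBall i N) : |‖x‖ - ((N + 2 : ℕ) : ℝ)| < 1 / 2 := by
  rw [← norm_single_natCast_add_two i N]
  exact (abs_norm_sub_norm_le _ _).trans_lt
    ((mem_ball_iff_norm.1 hx).trans_le (natCast_add_two_rpow_neg_two_le N))

variable {p : ℝ}

theorem spikeSum_nonneg : 0 ≤ spikeSum i p := fun _ =>
  tsum_nonneg fun _ => indicator_nonneg (fun _ _ => rpow_nonneg (Nat.cast_nonneg _) _) _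

theorem spikeSum_eq_zero_of_norm_lt_one {x : EuclideanSpace ℝ (Fin d)} (hx : ‖x‖ < 1) :
    spikeSum i p x = 0 :=
  tsum_indicator_const_apply_of_forall_notMem fun N hN => by
    have := abs_lt.1 (abs_norm_sub_lt_of_mem_spikeBall i hN)
    push_cast at this
    linarith [N.cast_nonneg (α := ℝ)]

theorem measurable_spikeSum : Measurable (spikeSum i p) :=
  measurable_tsum_indicator_const (pairwise_disjoint_spikeBall i) fun _ => measurableSet_ball

theorem spikeSum_single (N : ℕ) :
    spikeSum i p (EuclideanSpace.single i ((N + 2 : ℕ) : ℝ)) = ((N + 2 : ℕ) : ℝ) ^ (-(p - 1)) :=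
  tsum_indicator_const_apply_of_mem (pairwise_disjoint_spikeBall i)
    (Metric.mem_ball_self (rpow_pos_of_pos (by positivity) _))

theorem exists_norm_ge_lt_spikeSum (A R : ℝ) :
    ∃ x : EuclideanSpace ℝ (Fin d), R ≤ ‖x‖ ∧ A * ‖x‖ ^ (-p) < spikeSum i p x := by
  set K := ⌈max A R⌉₊
  have hK : max A R < ((K + 2 : ℕ) : ℝ) := by
    push_cast; linarith [Nat.le_ceil (max A R)]
  have hn : (0 : ℝ) < (K + 2 : ℕ) := by positivity
  refine ⟨EuclideanSpace.single i ((K + 2 : ℕ) : ℝ), ?_, ?_⟩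
  · rw [norm_single_natCast_add_two]; exact (le_max_right A R).trans hK.le
  · rw [norm_single_natCast_add_two, spikeSum_single, neg_sub, sub_eq_add_neg, rpow_add hn,
      rpow_one]
    exact mul_lt_mul_of_pos_right ((le_max_left A R).trans_lt hK) (rpow_pos_of_pos hn _)

theorem norm_rpow_mul_le_of_mem_spikeBall (hp : 0 ≤ p) {N : ℕ} {x : EuclideanSpace ℝ (Fin d)}
    (hx : x ∈ spikeBall i N) :
    ‖x‖ ^ p * ((N + 2 : ℕ) : ℝ) ^ (-(p - 1)) ≤ 2 ^ p * ((N + 2 : ℕ) : ℝ) := by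
  have hn : (2 : ℝ) ≤ (N + 2 : ℕ) := by push_cast; linarith [N.cast_nonneg (α := ℝ)]
  have hxn : ‖x‖ ≤ 2 * ((N + 2 : ℕ) : ℝ) := by
    linarith [(abs_lt.1 (abs_norm_sub_lt_of_mem_spikeBall i hx)).2]
  calc ‖x‖ ^ p * ((N + 2 : ℕ) : ℝ) ^ (-(p - 1))
      ≤ (2 * ((N + 2 : ℕ) : ℝ)) ^ p * ((N + 2 : ℕ) : ℝ) ^ (-(p - 1)) :=
        mul_le_mul_of_nonneg_right (rpow_le_rpow (norm_nonneg _) hxn hp) (by positivity)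
    _ = 2 ^ p * ((N + 2 : ℕ) : ℝ) := by
        rw [mul_rpow two_pos.le (by positivity), mul_assoc, ← rpow_add (by positivity),
          show p + -(p - 1) = 1 by ring, rpow_one]

theorem volume_spikeBall (N : ℕ) :
    volume (spikeBall i N) = ENNReal.ofReal ((((N + 2 : ℕ) : ℝ) ^ (-2 : ℝ)) ^ d) *
      volume (Metric.ball (0 : EuclideanSpace ℝ (Fin d)) 1) := by
  rw [spikeBall, Measure.addHaar_ball_of_pos _ _ (by positivity), finrank_euclideanSpace_fin]

theorem lintegral_norm_rpow_mul_spikeSum_lt_top (hd : 2 ≤ d) (hp : 0 ≤ p) :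
    ∫⁻ x, ENNReal.ofReal (‖x‖ ^ p * spikeSum i p x) < ⊤ := by
  have hsum : Summable fun N : ℕ => 2 ^ p * ((N + 2 : ℕ) : ℝ) ^ (1 - 2 * d : ℝ) :=
    ((summable_nat_add_iff 2).2 (Real.summable_nat_rpow.2 (by
      have : (2 : ℝ) ≤ d := by exact_mod_cast hd
      linarith))).mul_left _
  calc ∫⁻ x, ENNReal.ofReal (‖x‖ ^ p * spikeSum i p x)
      ≤ ∑' N, ENNReal.ofReal (2 ^ p * ((N + 2 : ℕ) : ℝ)) * volume (spikeBall i N) :=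
        lintegral_ofReal_mul_tsum_indicator_const_le _ (pairwise_disjoint_spikeBall i)
          (fun _ => measurableSet_ball) fun _ _ => norm_rpow_mul_le_of_mem_spikeBall i hp
    _ = (∑' N : ℕ, ENNReal.ofReal (2 ^ p * ((N + 2 : ℕ) : ℝ) ^ (1 - 2 * d : ℝ))) *
          volume (Metric.ball (0 : EuclideanSpace ℝ (Fin d)) 1) := by
        rw [← ENNReal.tsum_mul_right]
        congr 1 with N
        rw [volume_spikeBall, ← mul_assoc, ← ENNReal.ofReal_mul (by positivity), mul_assoc,
          natCast_add_two_mul_rpow_neg_two_pow]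
    _ < ⊤ := by
        rw [← ENNReal.ofReal_tsum_of_nonneg (fun N => by positivity) hsum]
        exact ENNReal.mul_lt_top ENNReal.ofReal_lt_top measure_ball_lt_top

theorem integrable_norm_rpow_mul_spikeSum (hd : 2 ≤ d) (hp : 0 ≤ p) :
    Integrable (fun x : EuclideanSpace ℝ (Fin d) => ‖x‖ ^ p * spikeSum i p x) :=
  ⟨(measurable_norm.pow_const p |>.mul (measurable_spikeSum i)).aestronglyMeasurable,
    (hasFiniteIntegral_iff_ofReal (Eventually.of_forall fun x =>
      mul_nonneg (rpow_nonneg (norm_nonneg x) p) (spikeSum_nonneg i x))).2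
      (lintegral_norm_rpow_mul_spikeSum_lt_top i hd hp)⟩

end Spikes

/-- The function `f = Σ_{N≥2} N^{-(2/(1-m)-1)} 1_{B_{N^{-2}}((N,0,…,0))}` has finite
`(2/(1-m))`-moment and satisfies the integral tail condition, yet fails every pointwise
Barenblatt-type decay bound. -/
theorem bad_function_in_X
    (d : ℕ) (hd : 3 ≤ d) (m : ℝ)
    (hm1 : ((d : ℝ) - 2) / d < m) (hm2 : m < 1)
    (f : EuclideanSpace ℝ (Fin d) → ℝ)
    (hf : ∀ x : EuclideanSpace ℝ (Fin d),
      f x = ∑' N : ℕ, Set.indicator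
        (Metric.ball
          (EuclideanSpace.single (⟨0, by omega⟩ : Fin d) (((N + 2 : ℕ) : ℝ)))
          (((N + 2 : ℕ) : ℝ) ^ (-2 : ℝ)))
        (fun _ => ((N + 2 : ℕ) : ℝ) ^ (-(2 / (1 - m) - 1))) x) :
    (∫⁻ x : EuclideanSpace ℝ (Fin d),
        ENNReal.ofReal (‖x‖ ^ (2 / (1 - m)) * f x) < ⊤) ∧
    BddAbove {y : ℝ | ∃ R : ℝ, 0 < R ∧
        y = R ^ (2 / (1 - m) - (d : ℝ)) *
          ∫ x in {x : EuclideanSpace ℝ (Fin d) | R ≤ ‖x‖}, f x} ∧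
    (∀ A > (0 : ℝ), ∀ R > (0 : ℝ), ∃ x : EuclideanSpace ℝ (Fin d),
      R ≤ ‖x‖ ∧ A * ‖x‖ ^ (-(2 / (1 - m))) < f x) := by
  obtain rfl : f = spikeSum ⟨0, by omega⟩ (2 / (1 - m)) := funext hf
  set i : Fin d := ⟨0, by omega⟩
  set p := 2 / (1 - m)
  have hdp : (d : ℝ) < p := by
    have hd0 : (0 : ℝ) < d := by positivity
    rw [lt_div_iff₀ (by linarith)]
    linarith [(div_lt_iff₀ hd0).1 hm1]
  have hd2 : 2 ≤ d := by omega
  have hp : 0 ≤ p := d.cast_nonneg.trans hdp.le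
  refine ⟨lintegral_norm_rpow_mul_spikeSum_lt_top i hd2 hp,
    ⟨∫ x, ‖x‖ ^ p * spikeSum i p x, ?_⟩, fun A _ R _ => exists_norm_ge_lt_spikeSum i A R⟩
  rintro _ ⟨R, hR, rfl⟩
  exact rpow_mul_setIntegral_norm_ge_le_integral_of_le (spikeSum_nonneg i)
    (fun _ => spikeSum_eq_zero_of_norm_lt_one i) (by linarith [d.cast_nonneg (α := ℝ)])
    (by linarith) hR.le (integrable_norm_rpow_mul_spikeSum i hd2 hp)
end

section
/- There exists B_0 > 0 such that for every B ≥ B_0 there exist t_0 > 0 and c > 0 with the following property: for every t ≥ t_0 and every x ∈ ℝ^d with D(t) ≤ |x|² ≤ 2 D(t), one has V̲(t,x) > 𝔅(t,x) and V̲(t,x) − 𝔅(t,x) > c t^{−α/(1−α(1−m))}. -/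
open MeasureTheory Real

/-!
On the annulus `D ≤ ‖x‖² ≤ 2D` both profiles are powers of `D` up to constants:
`V̲ ≥ A ((1 + 2B) D)^(-α)` and `𝔅 ≤ t^γ (b₁ D)^(-γ)` with `γ = 1/(1-m)`. Writing
`D = (K t + 1)^(1/s)` with `s = 1 - α(1-m) = (γ - α)/γ`, one has `D^(γ-α) = (K t + 1)^γ ≥ (K t)^γ`,
so `V̲ ≥ 2𝔅` as soon as `2 (1 + 2B)^α ≤ A K^γ b₁^γ`. Since `K` is proportional to `A^(m-1) B`,
the right-hand side equals `(2 m d s b₁ B)^γ`, independent of `A`, and it beats `2 (1 + 2B)^α` for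
large `B` because `α < γ`. Then `V̲ - 𝔅 ≥ V̲ / 2`, and `V̲ ≳ D^(-α) ≳ t^(-α/s)`.
-/

open Filter in
theorem eventually_two_mul_one_add_two_mul_rpow_le {α γ c : ℝ} (hα : 0 ≤ α) (hαγ : α < γ)
    (hc : 0 < c) : ∀ᶠ B in atTop, 2 * (1 + 2 * B) ^ α ≤ (c * B) ^ γ := by
  have hpow : Tendsto (fun B : ℝ => B ^ (γ - α)) atTop atTop := tendsto_rpow_atTop (by linarith)
  filter_upwards [hpow.eventually_ge_atTop (2 * 3 ^ α / c ^ γ), eventually_ge_atTop 1]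
    with B hB hB1
  have hB0 : 0 < B := by linarith
  calc 2 * (1 + 2 * B) ^ α ≤ 2 * (3 ^ α * B ^ α) := by
        rw [← mul_rpow (by norm_num) hB0.le]; gcongr; linarith
    _ = 2 * 3 ^ α / c ^ γ * c ^ γ * B ^ α := by field_simp
    _ ≤ B ^ (γ - α) * c ^ γ * B ^ α := by gcongr
    _ = (c * B) ^ γ := by
        rw [mul_rpow hc.le hB0.le, mul_comm (B ^ (γ - α)), mul_assoc, ← rpow_add hB0,
          sub_add_cancel]

theorem mul_rpow_sub_one_mul_rpow_one_div_one_sub {A m X : ℝ} (hA : 0 < A) (hm : m ≠ 1)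
    (hX : 0 ≤ X) : A * (A ^ (m - 1) * X) ^ (1 / (1 - m)) = X ^ (1 / (1 - m)) := by
  have hexp : (m - 1) * (1 / (1 - m)) = -1 := by
    field_simp [sub_ne_zero.mpr hm.symm]; ring
  rw [mul_rpow (rpow_nonneg hA.le _) hX, ← rpow_mul hA.le, hexp, rpow_neg_one, ← mul_assoc,
    mul_inv_cancel₀ hA.ne', one_mul]

theorem mul_rpow_neg_le_mul_add_mul_rpow_neg {A B D r α : ℝ} (hA : 0 ≤ A) (hB : 0 ≤ B)
    (hα : 0 ≤ α) (hD : 0 < D) (hr : 0 ≤ r) (hr2 : r ≤ 2 * D) :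
    A * ((1 + 2 * B) * D) ^ (-α) ≤ A * (D + B * r) ^ (-α) :=
  mul_le_mul_of_nonneg_left
    (rpow_le_rpow_of_nonpos (by positivity) (by nlinarith) (by linarith)) hA

theorem rpow_mul_add_rpow_neg_le {t b₀ b₁ D r γ ϑ : ℝ} (ht : 0 ≤ t) (hb₀ : 0 ≤ b₀)
    (hb₁ : 0 < b₁) (hD : 0 < D) (hDr : D ≤ r) (hγ : 0 ≤ γ) :
    t ^ γ * (b₀ * t ^ (2 * ϑ) + b₁ * r) ^ (-γ) ≤ t ^ γ * (b₁ * D) ^ (-γ) := by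
  have : 0 ≤ b₀ * t ^ (2 * ϑ) := by positivity
  exact mul_le_mul_of_nonneg_left (rpow_le_rpow_of_nonpos (by positivity)
    (by linarith [mul_le_mul_of_nonneg_left hDr hb₁.le]) (by linarith)) (by positivity)

theorem two_mul_rpow_mul_rpow_neg_le {A B D K b₁ t α γ : ℝ} (hA : 0 ≤ A) (hB : 0 ≤ B)
    (hD : 0 < D) (hK : 0 ≤ K) (hb₁ : 0 < b₁) (ht : 0 ≤ t)
    (hKD : (K * t) ^ γ ≤ D ^ (γ - α)) (hconst : 2 * (1 + 2 * B) ^ α ≤ A * K ^ γ * b₁ ^ γ) :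
    2 * (t ^ γ * (b₁ * D) ^ (-γ)) ≤ A * ((1 + 2 * B) * D) ^ (-α) := by
  have hP : 0 < (1 + 2 * B) ^ α := by positivity
  have hb₁γ : b₁ ^ γ * b₁ ^ (-γ) = 1 := by
    rw [← rpow_add hb₁, add_neg_cancel, rpow_zero]
  calc 2 * (t ^ γ * (b₁ * D) ^ (-γ))
      = 2 * (1 + 2 * B) ^ α * t ^ γ * b₁ ^ (-γ) * D ^ (-γ) * ((1 + 2 * B) ^ α)⁻¹ := by
        rw [mul_rpow hb₁.le hD.le]; field_simp
    _ ≤ A * K ^ γ * b₁ ^ γ * t ^ γ * b₁ ^ (-γ) * D ^ (-γ) * ((1 + 2 * B) ^ α)⁻¹ := by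
        gcongr
    _ = A * (K * t) ^ γ * D ^ (-γ) * ((1 + 2 * B) ^ α)⁻¹ := by
        rw [mul_rpow hK ht]
        linear_combination (A * K ^ γ * t ^ γ * D ^ (-γ) * ((1 + 2 * B) ^ α)⁻¹) * hb₁γ
    _ ≤ A * D ^ (γ - α) * D ^ (-γ) * ((1 + 2 * B) ^ α)⁻¹ := by gcongr
    _ = A * ((1 + 2 * B) * D) ^ (-α) := by
        rw [mul_rpow (by positivity) hD.le, rpow_neg (by positivity) α, mul_assoc A,
          ← rpow_add hD, show γ - α + -γ = -α by ring]; ring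

theorem barenblatt_lt_subsolution_with_gap {A B K b₀ b₁ t r α γ s ϑ : ℝ} (hA : 0 < A)
    (hB : 0 ≤ B) (hK : 0 ≤ K) (hb₀ : 0 ≤ b₀) (hb₁ : 0 < b₁) (hα : 0 ≤ α) (hγ : 0 ≤ γ) (hs : 0 < s)
    (hsγ : γ - α = s * γ) (hconst : 2 * (1 + 2 * B) ^ α ≤ A * K ^ γ * b₁ ^ γ) (ht : 1 ≤ t)
    (hr₁ : (K * t + 1) ^ (1 / s) ≤ r) (hr₂ : r ≤ 2 * (K * t + 1) ^ (1 / s)) :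
    t ^ γ * (b₀ * t ^ (2 * ϑ) + b₁ * r) ^ (-γ) < A * ((K * t + 1) ^ (1 / s) + B * r) ^ (-α) ∧
      A * (1 + 2 * B) ^ (-α) * (K + 1) ^ (-(α / s)) / 4 * t ^ (-(α / s)) <
        A * ((K * t + 1) ^ (1 / s) + B * r) ^ (-α) -
          t ^ γ * (b₀ * t ^ (2 * ϑ) + b₁ * r) ^ (-γ) := by
  have ht₀ : 0 < t := by linarith
  have hy : 0 < K * t + 1 := by positivity
  set D := (K * t + 1) ^ (1 / s) with hD_def
  have hD : 0 < D := rpow_pos_of_pos hy _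
  have hKD : (K * t) ^ γ ≤ D ^ (γ - α) := by
    rw [hsγ, hD_def, ← rpow_mul hy.le, show 1 / s * (s * γ) = γ by field_simp]
    exact rpow_le_rpow (by positivity) (by linarith) hγ
  have hDα : ((K + 1) * t) ^ (-(α / s)) ≤ D ^ (-α) := by
    rw [hD_def, ← rpow_mul hy.le, one_div_mul_eq_div, neg_div]
    exact rpow_le_rpow_of_nonpos hy (by nlinarith) (by rw [neg_nonpos]; positivity)
  have hr : 0 < r := hD.trans_le hr₁
  have hV := mul_rpow_neg_le_mul_add_mul_rpow_neg hA.le hB hα hD hr.le hr₂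
  have h𝔅 := rpow_mul_add_rpow_neg_le (ϑ := ϑ) ht₀.le hb₀ hb₁ hD hr₁ hγ
  have h2𝔅 := two_mul_rpow_mul_rpow_neg_le hA.le hB hD hK hb₁ ht₀.le hKD hconst
  have hgap : A * (1 + 2 * B) ^ (-α) * (K + 1) ^ (-(α / s)) * t ^ (-(α / s)) ≤
      A * ((1 + 2 * B) * D) ^ (-α) := by
    rw [mul_rpow (by positivity) hD.le, mul_assoc A, mul_assoc A, mul_assoc,
      ← mul_rpow (by positivity) ht₀.le]
    gcongr
  have h𝔅0 : 0 ≤ t ^ γ * (b₀ * t ^ (2 * ϑ) + b₁ * r) ^ (-γ) := by positivity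
  have hc : 0 < A * (1 + 2 * B) ^ (-α) * (K + 1) ^ (-(α / s)) * t ^ (-(α / s)) := by
    positivity
  constructor <;> linarith

theorem subsolution_exceeds_barenblatt_general
    (d : ℕ) (hd : 3 ≤ d) (m : ℝ)
    (hm1 : ((d : ℝ) - 2) / d < m) (hm2 : m < 1)
    (ϑ : ℝ)
    (ε : ℝ) (hε0 : 0 < ε) (hε1 : ε < 2 / (1 - m) - (d : ℝ))
    (α : ℝ) (hα : α = 1 / (1 - m) - ε / 2)
    (b₀ b₁ : ℝ) (hb₀ : 0 < b₀) (hb₁ : 0 < b₁)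
    (𝔅 : ℝ → EuclideanSpace ℝ (Fin d) → ℝ)
    (h𝔅 : ∀ t : ℝ, ∀ x : EuclideanSpace ℝ (Fin d),
      𝔅 t x = t ^ (1 / (1 - m)) * (b₀ * t ^ (2 * ϑ) + b₁ * ‖x‖ ^ 2) ^ (-(1 / (1 - m)))) :
    ∃ B₀ > (0 : ℝ), ∀ B : ℝ, B₀ ≤ B → ∀ A > (0 : ℝ),
      ∀ D : ℝ → ℝ, ∀ V : ℝ → EuclideanSpace ℝ (Fin d) → ℝ,
      A * (∫ y : EuclideanSpace ℝ (Fin d), (1 + ‖y‖ ^ 2) ^ (-α)) = B ^ ((d : ℝ) / 2) →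
      (∀ t : ℝ, D t =
        (2 * A ^ (m - 1) * m * B * (d : ℝ) * (1 - α * (1 - m)) * t + 1) ^
          (1 / (1 - α * (1 - m)))) →
      (∀ t : ℝ, ∀ x : EuclideanSpace ℝ (Fin d), V t x = A * (D t + B * ‖x‖ ^ 2) ^ (-α)) →
      ∃ t₀ > (0 : ℝ), ∃ c > (0 : ℝ), ∀ t ≥ t₀, ∀ x : EuclideanSpace ℝ (Fin d),
        D t ≤ ‖x‖ ^ 2 → ‖x‖ ^ 2 ≤ 2 * D t →
        𝔅 t x < V t x ∧
          c * t ^ (-(α / (1 - α * (1 - m)))) < V t x - 𝔅 t x := by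
  have hd3 : (3 : ℝ) ≤ d := by exact_mod_cast hd
  have hm0 : 0 < m := lt_trans (div_pos (by linarith) (by linarith)) hm1
  have h1m : 0 < 1 - m := by linarith
  have hs_eq : 1 - α * (1 - m) = ε * (1 - m) / 2 := by rw [hα]; field_simp; ring
  have hs0 : 0 < 1 - α * (1 - m) := by rw [hs_eq]; positivity
  have hsγ : 1 / (1 - m) - α = (1 - α * (1 - m)) * (1 / (1 - m)) := by field_simp
  have hα0 : 0 < α := by
    rw [hα]; rw [show 2 / (1 - m) = 2 * (1 / (1 - m)) by ring] at hε1; linarith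
  have hαγ : α < 1 / (1 - m) := by rw [hα]; linarith
  have hc₁ : 0 < 2 * m * d * (1 - α * (1 - m)) * b₁ := by positivity
  obtain ⟨B₀, hB₀⟩ := Filter.eventually_atTop.mp
    (eventually_two_mul_one_add_two_mul_rpow_le hα0.le hαγ hc₁)
  refine ⟨max B₀ 1, by positivity, fun B hB A hA D V _ hD hV => ?_⟩
  have hB1 : 1 ≤ B := le_of_max_le_right hB
  set K := 2 * A ^ (m - 1) * m * B * d * (1 - α * (1 - m))
  have hconst : 2 * (1 + 2 * B) ^ α ≤ A * K ^ (1 / (1 - m)) * b₁ ^ (1 / (1 - m)) := by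
    rw [mul_assoc, ← mul_rpow (by positivity) hb₁.le,
      show K * b₁ = A ^ (m - 1) * (2 * m * d * (1 - α * (1 - m)) * b₁ * B) by ring,
      mul_rpow_sub_one_mul_rpow_one_div_one_sub hA hm2.ne (by positivity)]
    exact hB₀ B (le_of_max_le_left hB)
  refine ⟨1, one_pos, A * (1 + 2 * B) ^ (-α) * (K + 1) ^ (-(α / (1 - α * (1 - m)))) / 4,
    by positivity, fun t ht x hx₁ hx₂ => ?_⟩
  rw [hD] at hx₁ hx₂
  rw [h𝔅, hV, hD]
  exact barenblatt_lt_subsolution_with_gap hA (by linarith) (by positivity) hb₀.le hb₁ hα0.le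
    (by positivity) hs0 hsγ hconst ht hx₁ hx₂

/-- For `B` large, the subsolution `V̲` eventually exceeds the Barenblatt profile `𝔅` on the
annulus `D(t) ≤ |x|² ≤ 2D(t)`, with a quantitative gap `c t^{-α/(1-α(1-m))}`. -/
theorem subsolution_exceeds_barenblatt
    (d : ℕ) (hd : 3 ≤ d) (m : ℝ)
    (hm1 : ((d : ℝ) - 2) / d < m) (hm2 : m < 1)
    (ϑ : ℝ) (hϑ : ϑ = 1 / ((d : ℝ) * m - (d : ℝ) + 2))
    (ε : ℝ) (hε0 : 0 < ε) (hε1 : ε < 2 / (1 - m) - (d : ℝ))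
    (α : ℝ) (hα : α = 1 / (1 - m) - ε / 2)
    (b₀ b₁ : ℝ) (hb₀ : 0 < b₀) (hb₁ : 0 < b₁)
    (𝔅 : ℝ → EuclideanSpace ℝ (Fin d) → ℝ)
    (h𝔅 : ∀ t : ℝ, ∀ x : EuclideanSpace ℝ (Fin d),
      𝔅 t x = t ^ (1 / (1 - m)) * (b₀ * t ^ (2 * ϑ) + b₁ * ‖x‖ ^ 2) ^ (-(1 / (1 - m)))) :
    ∃ B₀ > (0 : ℝ), ∀ B : ℝ, B₀ ≤ B → ∀ A > (0 : ℝ),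
      ∀ D : ℝ → ℝ, ∀ V : ℝ → EuclideanSpace ℝ (Fin d) → ℝ,
      A * (∫ y : EuclideanSpace ℝ (Fin d), (1 + ‖y‖ ^ 2) ^ (-α)) = B ^ ((d : ℝ) / 2) →
      (∀ t : ℝ, D t =
        (2 * A ^ (m - 1) * m * B * (d : ℝ) * (1 - α * (1 - m)) * t + 1) ^
          (1 / (1 - α * (1 - m)))) →
      (∀ t : ℝ, ∀ x : EuclideanSpace ℝ (Fin d), V t x = A * (D t + B * ‖x‖ ^ 2) ^ (-α)) →
      ∃ t₀ > (0 : ℝ), ∃ c > (0 : ℝ), ∀ t ≥ t₀, ∀ x : EuclideanSpace ℝ (Fin d),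
        D t ≤ ‖x‖ ^ 2 → ‖x‖ ^ 2 ≤ 2 * D t →
        𝔅 t x < V t x ∧
          c * t ^ (-(α / (1 - α * (1 - m)))) < V t x - 𝔅 t x :=
  subsolution_exceeds_barenblatt_general d hd m hm1 hm2 ϑ ε hε0 hε1 α hα b₀ b₁ hb₀ hb₁ 𝔅 h𝔅
end
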